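/- arXiv:hep-th/0112096 — 7 statements merged into one kernel-verified Lean document; each statement's English description precedes it below -/
import Mathlib

section
/- Let r ≥ 1 and let L be an M_r(ℂ)-valued function, holomorphic on a punctured neighborhood of z₀ ∈ ℂ, with Laurent expansion L(z) = β·αᵀ·(z−z₀)⁻¹ + L₁ + L₂(z−z₀) + O((z−z₀)²), where α, β ∈ ℂʳ satisfy αᵀβ = 1 and αᵀL₁ = κ·αᵀ for some κ ∈ ℂ. Let f be a row-vector-valued function, holomorphic on the punctured neighborhood, with expansion f(z) = λ·αᵀ·(z−z₀)⁻¹ + f₀ + O(z−z₀) for some λ ∈ ℂ and constant row vector f₀. Then the row-vector function g := −(f′ + f·L) has at most a simple pole at z₀, and its residue is proportional to αᵀ; explicitly, g(z) = λ′·αᵀ·(z−z₀)⁻¹ + O(1) with λ′ = −(λκ + f₀β). (This is the invariance of the space F_s of framed local sections under the adjoint action fᵀ ↦ −(∂_z fᵀ + fᵀL), equation (action) of the paper.) -/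
/-!
Write `t = z - z₀`. Differentiating the expansion of `f` gives `f′ = -t⁻²·λαᵀ + O(1)`, while
multiplying out `f·L` gives `t⁻²·λ(αᵀβ)αᵀ + t⁻¹·(λ αᵀL₁ + (f₀β)αᵀ) + O(1)`. Since `αᵀβ = 1` the
double poles cancel in `f′ + f·L`, and since `αᵀL₁ = καᵀ` the simple pole is `(λκ + f₀β)αᵀ`.
-/

open Topology Matrix

theorem hasDerivAt_of_eventuallyEq_laurent {𝕜 E : Type*} [NontriviallyNormedField 𝕜]
    [NormedAddCommGroup E] [NormedSpace 𝕜 E] {φ ψ : 𝕜 → E} {a b : E} {z z₀ : 𝕜}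
    (hz : z ≠ z₀) (hψ : DifferentiableAt 𝕜 ψ z)
    (hφ : ∀ᶠ w in 𝓝 z, φ w = (w - z₀)⁻¹ • a + b + (w - z₀) • ψ w) :
    HasDerivAt φ (-((z - z₀) ^ 2)⁻¹ • a + (ψ z + (z - z₀) • deriv ψ z)) z := by
  have hpole : HasDerivAt (fun w => (w - z₀)⁻¹ • a) (-((z - z₀) ^ 2)⁻¹ • a) z := by
    simpa [neg_div, neg_smul] using
      (((hasDerivAt_id z).sub_const z₀).fun_inv (sub_ne_zero.2 hz)).smul_const a
  have hreg : HasDerivAt (fun w => (w - z₀) • ψ w) (ψ z + (z - z₀) • deriv ψ z) z := by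
    simpa [add_comm] using ((hasDerivAt_id z).sub_const z₀).fun_smul hψ.hasDerivAt
  exact ((hpole.add_const b).add hreg).congr_of_eventuallyEq hφ

theorem vecMul_laurent {K n : Type*} [Field K] [Fintype n] {α β f₀ ρ : n → K}
    {L₁ L₂ R : Matrix n n K} {t lam κ : K} (ht : t ≠ 0) (hαβ : α ⬝ᵥ β = 1)
    (hκ : α ᵥ* L₁ = κ • α) :
    (t⁻¹ • (lam • α) + f₀ + t • ρ) ᵥ* (t⁻¹ • vecMulVec β α + L₁ + t • L₂ + t ^ 2 • R)
      = (t ^ 2)⁻¹ • (lam • α) + t⁻¹ • ((lam * κ + f₀ ⬝ᵥ β) • α)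
        + (lam • α ᵥ* (L₂ + t • R) + (ρ ⬝ᵥ β) • α
          + (f₀ + t • ρ) ᵥ* (L₁ + t • L₂ + t ^ 2 • R)) := by
  simp only [add_vecMul, vecMul_add, smul_vecMul, vecMul_smul, vecMul_vecMulVec, add_dotProduct,
    smul_dotProduct, hαβ, hκ]
  ext j
  simp only [Pi.add_apply, Pi.smul_apply, smul_eq_mul]
  field_simp
  ring

theorem stmt_1_general (r : ℕ) (z₀ : ℂ) (V : Set ℂ) (hVopen : IsOpen V) (hz₀ : z₀ ∈ V)
    (L RL : ℂ → Matrix (Fin r) (Fin r) ℂ)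
    (α β : Fin r → ℂ) (L₁ L₂ : Matrix (Fin r) (Fin r) ℂ) (κ : ℂ)
    (hRL : ∀ i j, DifferentiableOn ℂ (fun z => RL z i j) V)
    (hLexp : ∀ z ∈ V \ {z₀},
      L z = (z - z₀)⁻¹ • Matrix.of (fun i j => β i * α j) + L₁ + (z - z₀) • L₂
            + ((z - z₀) ^ 2) • RL z)
    (hαβ : (∑ i, α i * β i) = 1)
    (hκ : ∀ j, (∑ i, α i * L₁ i j) = κ * α j)
    (f ρ : ℂ → Fin r → ℂ) (lam : ℂ) (f₀ : Fin r → ℂ)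
    (hρ : ∀ j, DifferentiableOn ℂ (fun z => ρ z j) V)
    (hfexp : ∀ z ∈ V \ {z₀}, f z = (z - z₀)⁻¹ • (lam • α) + f₀ + (z - z₀) • ρ z) :
    ∃ W : Set ℂ, IsOpen W ∧ z₀ ∈ W ∧ W ⊆ V ∧
      ∃ h : ℂ → Fin r → ℂ,
        (∀ j, DifferentiableOn ℂ (fun z => h z j) W) ∧
        ∀ z ∈ W \ {z₀},
          (fun j => -(deriv (fun w => f w j) z + ∑ i, f z i * L z i j))
            = (z - z₀)⁻¹ • ((-(lam * κ + ∑ i, f₀ i * β i)) • α) + h z := by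
  have hρV : DifferentiableOn ℂ ρ V := differentiableOn_pi.2 hρ
  have hρ' : ∀ j, DifferentiableOn ℂ (fun z => deriv ρ z j) V :=
    differentiableOn_pi.1 (hρV.deriv hVopen)
  refine ⟨V, hVopen, hz₀, subset_rfl, fun z => -(ρ z + (z - z₀) • deriv ρ z
    + (lam • α ᵥ* (L₂ + (z - z₀) • RL z) + (ρ z ⬝ᵥ β) • α
      + (f₀ + (z - z₀) • ρ z) ᵥ* (L₁ + (z - z₀) • L₂ + (z - z₀) ^ 2 • RL z))), fun j => ?_, ?_⟩
  · simp only [Pi.neg_apply, Pi.add_apply, Pi.smul_apply, smul_eq_mul, vecMul, dotProduct,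
      Matrix.add_apply, Matrix.smul_apply]
    fun_prop
  · rintro z ⟨hzV, hz⟩
    have hderiv : HasDerivAt f (-((z - z₀) ^ 2)⁻¹ • (lam • α) + (ρ z + (z - z₀) • deriv ρ z)) z :=
      hasDerivAt_of_eventuallyEq_laurent hz (hρV.differentiableAt (hVopen.mem_nhds hzV))
        (Filter.eventually_of_mem ((hVopen.sdiff isClosed_singleton).mem_nhds ⟨hzV, hz⟩) hfexp)
    funext j
    rw [(hasDerivAt_pi.1 hderiv j).deriv, show ∑ i, f z i * L z i j = (f z ᵥ* L z) j from rfl,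
      hfexp z ⟨hzV, hz⟩, hLexp z ⟨hzV, hz⟩, ← vecMulVec,
      vecMul_laurent (sub_ne_zero.2 hz) hαβ (funext hκ)]
    simp only [Pi.neg_apply, Pi.add_apply, Pi.smul_apply, smul_eq_mul, dotProduct]
    ring

/-- Invariance of the space `F_s` of framed local sections under the adjoint action
`fᵀ ↦ −(∂_z fᵀ + fᵀL)` (equation (action) of the paper): if `L` has a simple pole with
rank-one residue `β·αᵀ`, `αᵀβ = 1`, `αᵀL₁ = κ·αᵀ`, and `f` has a simple pole with residue
`λ·αᵀ`, then `g = −(f′ + f·L)` has at most a simple pole with residue `λ′·αᵀ`,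
`λ′ = −(λκ + f₀β)`. -/
theorem stmt_1 (r : ℕ) (hr : 1 ≤ r) (z₀ : ℂ) (V : Set ℂ) (hVopen : IsOpen V) (hz₀ : z₀ ∈ V)
    (L RL : ℂ → Matrix (Fin r) (Fin r) ℂ)
    (α β : Fin r → ℂ) (L₁ L₂ : Matrix (Fin r) (Fin r) ℂ) (κ : ℂ)
    (hL : ∀ i j, DifferentiableOn ℂ (fun z => L z i j) (V \ {z₀}))
    (hRL : ∀ i j, DifferentiableOn ℂ (fun z => RL z i j) V)
    (hLexp : ∀ z ∈ V \ {z₀},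
      L z = (z - z₀)⁻¹ • Matrix.of (fun i j => β i * α j) + L₁ + (z - z₀) • L₂
            + ((z - z₀) ^ 2) • RL z)
    (hαβ : (∑ i, α i * β i) = 1)
    (hκ : ∀ j, (∑ i, α i * L₁ i j) = κ * α j)
    (f ρ : ℂ → Fin r → ℂ) (lam : ℂ) (f₀ : Fin r → ℂ)
    (hf : ∀ j, DifferentiableOn ℂ (fun z => f z j) (V \ {z₀}))
    (hρ : ∀ j, DifferentiableOn ℂ (fun z => ρ z j) V)
    (hfexp : ∀ z ∈ V \ {z₀}, f z = (z - z₀)⁻¹ • (lam • α) + f₀ + (z - z₀) • ρ z) :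
    ∃ W : Set ℂ, IsOpen W ∧ z₀ ∈ W ∧ W ⊆ V ∧
      ∃ h : ℂ → Fin r → ℂ,
        (∀ j, DifferentiableOn ℂ (fun z => h z j) W) ∧
        ∀ z ∈ W \ {z₀},
          (fun j => -(deriv (fun w => f w j) z + ∑ i, f z i * L z i j))
            = (z - z₀)⁻¹ • ((-(lam * κ + ∑ i, f₀ i * β i)) • α) + h z :=
  stmt_1_general r z₀ V hVopen hz₀ L RL α β L₁ L₂ κ hRL hLexp hαβ hκ f ρ lam f₀ hρ hfexp
end

section
/- Let r ≥ 1 and let L be an M_r(ℂ)-valued function, holomorphic on a punctured neighborhood of z₀ ∈ ℂ, with Laurent expansion L(z) = L₀·(z−z₀)⁻¹ + L₁ + O(z−z₀), where L₀ = β·αᵀ with αᵀβ = 1 and αᵀL₁ = κ·αᵀ for some κ ∈ ℂ. Let w be holomorphic and injective on a neighborhood of z₀ with a := w′(z₀) ≠ 0 and b := w″(z₀), let w₀ := w(z₀), and let φ be the local holomorphic inverse of w near w₀. Define the transported matrix function M(ω) := L(φ(ω))·φ′(ω) (so that M dω = L dz). Then M is holomorphic on a punctured neighborhood of w₀ with a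 simple pole at w₀, its residue equals L₀, and its constant Laurent coefficient M₁ (defined by M(ω) = L₀(ω−w₀)⁻¹ + M₁ + O(ω−w₀)) satisfies αᵀM₁ = κ′·αᵀ, where κ′ = κ/a − b/(2a²); equivalently κ = κ′·w′(z₀) + w″(z₀)/(2 w′(z₀)). (This is the transformation law (affine) of the paper, stating that the pair (γ_s, κ_s) transforms as a point of the bundle of scalar affine connections.) -/
open Topology Filter

private lemma key_scalar (x u g dg du0 du gw uw l0 l1 rl : ℂ) (hx : x ≠ 0) (hu : u ≠ 0)
    (hdu : du = g * u) (hgw : gw = g - x * dg) (huw : uw = u - x * du0) :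
    (u + x * du) * ((x * u)⁻¹ * l0 + l1 + (x * u) * rl)
      = x⁻¹ * l0 + (gw * l0 + uw * l1)
        + x * (dg * l0 + (du0 + du) * l1 + (u * (u + x * du)) * rl) := by
  subst hdu hgw huw
  field_simp
  ring

/-- Transformation law (affine) of the paper: under a holomorphic change of coordinate
`ω = w(z)` with inverse `φ`, the transported matrix function `M(ω) = L(φ(ω))·φ′(ω)`
again has a simple pole with residue `β·αᵀ`, and its constant Laurent coefficient `M₁`
satisfies `αᵀM₁ = κ′·αᵀ` with `κ′ = κ/a − b/(2a²)`, where `a = w′(z₀)`, `b = w″(z₀)`;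
i.e. `(γ_s, κ_s)` transforms as a point of the bundle of scalar affine connections. -/
theorem stmt_2 (r : ℕ) (hr : 1 ≤ r) (z₀ : ℂ)
    (N : Set ℂ) (hN : IsOpen N) (hz₀ : z₀ ∈ N)
    (L RL : ℂ → Matrix (Fin r) (Fin r) ℂ)
    (α β : Fin r → ℂ) (L₁ : Matrix (Fin r) (Fin r) ℂ) (κ : ℂ)
    (hL : ∀ i j, DifferentiableOn ℂ (fun z => L z i j) (N \ {z₀}))
    (hRL : ∀ i j, DifferentiableOn ℂ (fun z => RL z i j) N)
    (hLexp : ∀ z ∈ N \ {z₀},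
      L z = (z - z₀)⁻¹ • Matrix.of (fun i j => β i * α j) + L₁ + (z - z₀) • RL z)
    (hαβ : (∑ i, α i * β i) = 1)
    (hκ : ∀ j, (∑ i, α i * L₁ i j) = κ * α j)
    (w : ℂ → ℂ) (hw : DifferentiableOn ℂ w N) (hwinj : Set.InjOn w N)
    (a b : ℂ) (ha : a = deriv w z₀) (ha0 : a ≠ 0) (hb : b = deriv (deriv w) z₀)
    (N' : Set ℂ) (hN' : IsOpen N') (hw₀ : w z₀ ∈ N')
    (φ : ℂ → ℂ) (hφ : DifferentiableOn ℂ φ N') (hφmap : Set.MapsTo φ N' N)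
    (hφz₀ : φ (w z₀) = z₀) (hinv : ∀ ω ∈ N', w (φ ω) = ω) :
    ∃ W : Set ℂ, IsOpen W ∧ w z₀ ∈ W ∧ W ⊆ N' ∧
      ∃ (M₁ : Matrix (Fin r) (Fin r) ℂ) (S : ℂ → Matrix (Fin r) (Fin r) ℂ),
        (∀ i j, DifferentiableOn ℂ (fun ω => S ω i j) W) ∧
        (∀ ω ∈ W \ {w z₀},
          deriv φ ω • L (φ ω)
            = (ω - w z₀)⁻¹ • Matrix.of (fun i j => β i * α j) + M₁ + (ω - w z₀) • S ω) ∧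
        (∀ j, (∑ i, α i * M₁ i j) = (κ / a - b / (2 * a ^ 2)) * α j) := by
  set w₀ := w z₀ with hw₀def
  set p := dslope w z₀ with hpdef
  set u := dslope φ w₀ with hudef
  have hNnz : N ∈ 𝓝 z₀ := hN.mem_nhds hz₀
  have hN'w : N' ∈ 𝓝 w₀ := hN'.mem_nhds hw₀
  have hpdiff : DifferentiableOn ℂ p N := (Complex.differentiableOn_dslope hNnz).mpr hw
  have hudiff : DifferentiableOn ℂ u N' := (Complex.differentiableOn_dslope hN'w).mpr hφ
  have hφdiffat : DifferentiableAt ℂ φ w₀ := hφ.differentiableAt hN'w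
  have hwdiffat : DifferentiableAt ℂ w z₀ := hw.differentiableAt hNnz
  -- chain rule: a * deriv φ w₀ = 1
  have hwφ : DifferentiableAt ℂ w (φ w₀) := by rw [hφz₀]; exact hwdiffat
  have hchain : a * deriv φ w₀ = 1 := by
    have h1 : (fun ω => w (φ ω)) =ᶠ[𝓝 w₀] id := by
      filter_upwards [hN'w] with ω hω using hinv ω hω
    have h2 : HasDerivAt (w ∘ φ) (deriv w (φ w₀) * deriv φ w₀) w₀ :=
      (hwφ.hasDerivAt).comp w₀ hφdiffat.hasDerivAt
    have h3 : deriv (fun ω => w (φ ω)) w₀ = deriv (id : ℂ → ℂ) w₀ := h1.deriv_eq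
    rw [deriv_id, show (fun ω => w (φ ω)) = w ∘ φ from rfl, h2.deriv, hφz₀, ← ha] at h3
    exact h3
  have hφ'w₀ : deriv φ w₀ = a⁻¹ := eq_inv_of_mul_eq_one_right hchain
  have huw₀ : u w₀ = a⁻¹ := by rw [hudef, dslope_same]; exact hφ'w₀
  have hpz₀ : p z₀ = a := by rw [hpdef, dslope_same, ha]
  -- global dslope identities
  have hId1 : ∀ ω, (ω - w₀) * u ω = φ ω - z₀ := fun ω => by
    have h := sub_smul_dslope φ w₀ ω
    rw [hφz₀] at h
    simpa [smul_eq_mul] using h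
  have hId2 : ∀ z, (z - z₀) * p z = w z - w₀ := fun z => by
    simpa [smul_eq_mul] using sub_smul_dslope w z₀ z
  -- continuity facts
  have hpcz : ContinuousAt p z₀ := (hpdiff.differentiableAt hNnz).continuousAt
  have hφcont : ContinuousAt φ w₀ := hφdiffat.continuousAt
  have hpφcont : ContinuousAt (fun ω => p (φ ω)) w₀ := by
    refine ContinuousAt.comp ?_ hφcont
    rw [hφz₀]; exact hpcz
  have hucont : ContinuousAt u w₀ := (hudiff.differentiableAt hN'w).continuousAt
  have ev1 : ∀ᶠ ω in 𝓝 w₀, ω ∈ N' := hN'.eventually_mem hw₀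
  have ev2 : ∀ᶠ ω in 𝓝 w₀, φ ω ∈ N := hφcont.eventually_mem (by rw [hφz₀]; exact hNnz)
  have ev3 : ∀ᶠ ω in 𝓝 w₀, u ω ≠ 0 :=
    hucont.eventually_ne (by rw [huw₀]; exact inv_ne_zero ha0)
  have ev4 : ∀ᶠ ω in 𝓝 w₀, p (φ ω) ≠ 0 :=
    hpφcont.eventually_ne (by simp only [hφz₀, hpz₀]; exact ha0)
  -- u = (p ∘ φ)⁻¹ near w₀
  have hueq : u =ᶠ[𝓝 w₀] fun ω => (p (φ ω))⁻¹ := by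
    filter_upwards [ev1, ev4] with ω h1 h4
    rcases eq_or_ne ω w₀ with rfl | hne
    · rw [huw₀, hφz₀, hpz₀]
    · have hsub : ω - w₀ ≠ 0 := sub_ne_zero.mpr hne
      have key : u ω * p (φ ω) = 1 := by
        have h5 : (ω - w₀) * (u ω * p (φ ω)) = (ω - w₀) * 1 := by
          rw [← mul_assoc, hId1 ω, hId2 (φ ω), hinv ω h1, mul_one]
        exact mul_left_cancel₀ hsub h5
      exact eq_inv_of_mul_eq_one_left key
  -- deriv p z₀ = b / 2
  have hpan : AnalyticOnNhd ℂ p N := hpdiff.analyticOnNhd hN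
  have hp'z : DifferentiableAt ℂ (deriv p) z₀ := (hpan.deriv z₀ hz₀).differentiableAt
  have hwid : w = fun t => w₀ + (t - z₀) * p t := by
    funext t
    linear_combination -hId2 t
  have hwev : deriv w =ᶠ[𝓝 z₀] fun z => p z + (z - z₀) * deriv p z := by
    filter_upwards [hNnz] with z hz
    have hpz : DifferentiableAt ℂ p z := hpdiff.differentiableAt (hN.mem_nhds hz)
    have h1 : HasDerivAt (fun t => w₀ + (t - z₀) * p t)
        (1 * p z + (z - z₀) * deriv p z) z :=
      (((hasDerivAt_id z).sub_const z₀).mul hpz.hasDerivAt).const_add w₀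
    rw [hwid]
    rw [h1.deriv]
    ring
  have hpb : deriv p z₀ = b / 2 := by
    have h2 : HasDerivAt (fun z => p z + (z - z₀) * deriv p z)
        (deriv p z₀ + (1 * deriv p z₀ + (z₀ - z₀) * deriv (deriv p) z₀)) z₀ :=
      (hpdiff.differentiableAt hNnz).hasDerivAt.add
        (((hasDerivAt_id z₀).sub_const z₀).mul hp'z.hasDerivAt)
    have h3 : deriv (deriv w) z₀ = 2 * deriv p z₀ := by
      rw [hwev.deriv_eq, h2.deriv]; ring
    rw [hb, h3]; ring
  -- deriv u w₀ = -(b/2 * a⁻¹) / a ^ 2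
  have hq : HasDerivAt (fun ω => (p (φ ω))⁻¹)
      (-(deriv p z₀ * deriv φ w₀) / (p (φ w₀)) ^ 2) w₀ := by
    have hpd : HasDerivAt p (deriv p z₀) (φ w₀) := by
      rw [hφz₀]; exact (hpdiff.differentiableAt hNnz).hasDerivAt
    have hcomp : HasDerivAt (fun ω => p (φ ω)) (deriv p z₀ * deriv φ w₀) w₀ :=
      hpd.comp w₀ hφdiffat.hasDerivAt
    exact hcomp.inv (by rw [hφz₀, hpz₀]; exact ha0)
  have hu'w₀ : deriv u w₀ = -(b / 2 * a⁻¹) / a ^ 2 := by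
    rw [hueq.deriv_eq, hq.deriv, hpb, hφ'w₀, hφz₀, hpz₀]
  -- choose W
  have hevW : ∀ᶠ ω in 𝓝 w₀, ω ∈ N' ∧ φ ω ∈ N ∧ u ω ≠ 0 := ev1.and (ev2.and ev3)
  rw [eventually_nhds_iff] at hevW
  obtain ⟨W, hWall, hWopen, hWmem⟩ := hevW
  have hWsubN' : W ⊆ N' := fun ω h => (hWall ω h).1
  have hWnhds : W ∈ 𝓝 w₀ := hWopen.mem_nhds hWmem
  have huW : DifferentiableOn ℂ u W := hudiff.mono hWsubN'
  have hdu'W : DifferentiableOn ℂ (deriv u) W :=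
    ((hudiff.analyticOnNhd hN').deriv).differentiableOn.mono hWsubN'
  set g : ℂ → ℂ := fun ω => deriv u ω * (u ω)⁻¹ with hgdef
  have hgW : DifferentiableOn ℂ g W :=
    hdu'W.mul (huW.inv fun ω h => (hWall ω h).2.2)
  have hgw₀val : g w₀ = -(b / 2 * a⁻¹) / a ^ 2 * a := by
    rw [hgdef]; simp only []
    rw [hu'w₀, huw₀, inv_inv]
  -- deriv φ on W
  have hdφ : ∀ ω ∈ W, deriv φ ω = u ω + (ω - w₀) * deriv u ω := by
    intro ω hω
    have hua : DifferentiableAt ℂ u ω := hudiff.differentiableAt (hN'.mem_nhds (hWsubN' hω))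
    have hφeq : φ = fun ω' => z₀ + (ω' - w₀) * u ω' := by
      funext ω'
      linear_combination -hId1 ω'
    have h1 : HasDerivAt (fun ω' => z₀ + (ω' - w₀) * u ω')
        (1 * u ω + (ω - w₀) * deriv u ω) ω :=
      (((hasDerivAt_id ω).sub_const w₀).mul hua.hasDerivAt).const_add z₀
    rw [hφeq, h1.deriv]; ring
  refine ⟨W, hWopen, hWmem, hWsubN',
    g w₀ • Matrix.of (fun i j => β i * α j) + u w₀ • L₁,
    (fun ω => dslope g w₀ ω • Matrix.of (fun i j => β i * α j)
        + (dslope u w₀ ω + deriv u ω) • L₁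
        + (u ω * (u ω + (ω - w₀) * deriv u ω)) • RL (φ ω)), ?_, ?_, ?_⟩
  · -- differentiability of S entries
    intro i j
    have hA : DifferentiableOn ℂ (dslope g w₀) W := (Complex.differentiableOn_dslope hWnhds).mpr hgW
    have hB : DifferentiableOn ℂ (dslope u w₀) W := (Complex.differentiableOn_dslope hWnhds).mpr huW
    have hD : DifferentiableOn ℂ (fun ω => RL (φ ω) i j) W :=
      (hRL i j).comp (hφ.mono hWsubN') (fun ω h => (hWall ω h).2.1)
    simp only [Matrix.add_apply, Matrix.smul_apply, Matrix.of_apply, smul_eq_mul]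
    exact ((hA.mul_const _).add ((hB.add hdu'W).mul_const _)).add
      ((huW.mul (huW.add ((differentiableOn_id.sub_const w₀).mul hdu'W))).mul hD)
  · -- the expansion
    intro ω hω
    obtain ⟨hωW, hωne'⟩ := hω
    have hωne : ω ≠ w₀ := by simpa using hωne'
    have hN'ω : ω ∈ N' := (hWall ω hωW).1
    have hφωN : φ ω ∈ N := (hWall ω hωW).2.1
    have hu0 : u ω ≠ 0 := (hWall ω hωW).2.2
    have hxne : ω - w₀ ≠ 0 := sub_ne_zero.mpr hωne
    have hφωne : φ ω ≠ z₀ := by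
      intro h
      apply hωne
      rw [← hinv ω hN'ω, h]
    have hLx := hLexp (φ ω) ⟨hφωN, by simpa using hφωne⟩
    have hdg : (ω - w₀) * dslope g w₀ ω = g ω - g w₀ := by
      simpa [smul_eq_mul] using sub_smul_dslope g w₀ ω
    have hdu : (ω - w₀) * dslope u w₀ ω = u ω - u w₀ := by
      simpa [smul_eq_mul] using sub_smul_dslope u w₀ ω
    have e1 : g w₀ = g ω - (ω - w₀) * dslope g w₀ ω := by linear_combination hdg
    have e2 : u w₀ = u ω - (ω - w₀) * dslope u w₀ ω := by linear_combination hdu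
    have e3 : deriv u ω = g ω * u ω := by
      rw [hgdef]; field_simp
    rw [hLx, hdφ ω hωW]
    ext i j
    simp only [Matrix.smul_apply, Matrix.add_apply, Matrix.of_apply, smul_eq_mul]
    rw [← hId1 ω, e1, e2, e3]
    exact key_scalar (ω - w₀) (u ω) (g ω) (dslope g w₀ ω) (dslope u w₀ ω) (g ω * u ω)
      _ _ _ _ _ hxne hu0 rfl rfl rfl
  · -- the α computation
    intro j
    simp only [Matrix.add_apply, Matrix.smul_apply, Matrix.of_apply, smul_eq_mul]
    have h1 : ∀ i, α i * (g w₀ * (β i * α j) + u w₀ * L₁ i j)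
        = g w₀ * α j * (α i * β i) + u w₀ * (α i * L₁ i j) := fun i => by ring
    rw [Finset.sum_congr rfl (fun i _ => h1 i), Finset.sum_add_distrib,
      ← Finset.mul_sum, ← Finset.mul_sum, hαβ, hκ j, hgw₀val, huw₀]
    field_simp
    ring
end

section
/- Let r ≥ 1 and h ≥ 1 be integers, let K = diag(k₁, …, k_r) ∈ M_r(ℂ) with k_i ≠ k_j for all i ≠ j, and let (L_n)_{n ≥ −h} be an arbitrary sequence in M_r(ℂ) with L_{−h} = K. Then there exists a unique pair of sequences ((ξ_n)_{n ≥ 1}, (K_n)_{n ≥ −h+1}) such that each ξ_n ∈ M_r(ℂ) has all diagonal entries equal to zero, each K_n is a diagonal matrix, and, setting ξ₀ := 1 (the identity matrix) and K_{−h} := K, for every integer n > −h the equation [n ξ_n, included only when n ≥ 1] + Σ_{s=0}^{n+h} ξ_s K_{n−s} = Σ_{s=0}^{n+h} L_{n−s} ξ_s holds in M_r(ℂ). (These are exactly the coefficient equations obtained by substituting the formal series ψ = (Σ_{s≥0} ξ_s w^s)·exp(Σ_n K_n ∫ w^{n−1} dw) into the formal ODE dψ/dw = (Σ_{n ≥ −h}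 L_n w^{n−1})ψ; this is the paper's Lemma 3.1 at an irregular singular point of order h+1, in the frame where the leading coefficient is already diagonal.) -/
/-!
In the shifted indexing of the statement, the coefficient equation of order `m ≥ 1` reads
`K_m + (ξ_m K - K ξ_m) = C_m`, where `C_m` involves only coefficients of order `< m` (the
term `n ξ_n` has order `m - h < m` because `h ≥ 1`). Since the `k_i` are distinct, the map
`ξ ↦ ξ K - K ξ` multiplies the `(i, j)` entry by `k_j - k_i ≠ 0` off the diagonal and kills
the diagonal, so the diagonal of `C_m` is forced to be `K_m` and its off-diagonal part
determines `ξ_m`. Strong recursion on `m` then gives existence and uniqueness.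
-/

open Matrix Finset Function

theorem Nat.existsUnique_forall_eq_of_strongRec {α : Type*} [Nonempty α]
    (G : ℕ → (ℕ → α) → α)
    (hG : ∀ m x y, (∀ j < m, x j = y j) → G m x = G m y) :
    ∃! x : ℕ → α, ∀ m, x m = G m x := by
  classical
  let x : ℕ → α := WellFoundedLT.fix fun m rec =>
    G m fun j => if hj : j < m then rec j hj else Classical.arbitrary α
  have hx : ∀ m, x m = G m x := fun m => by
    rw [show x m = _ from WellFoundedLT.fix_eq _ m]
    exact hG m _ _ fun j hj => by simp [hj, x]
  refine ⟨x, hx, fun y hy => funext fun m => ?_⟩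
  induction m using Nat.strong_induction_on with
  | _ m ih => rw [hy m, hx m]; exact hG m _ _ ih

theorem add_sum_mul_eq_sum_mul_iff {R : Type*} [Ring R] {D T : R} {ξ K L : ℕ → R}
    (hξ : ξ 0 = 1) (hK : K 0 = D) (hL : L 0 = D) {m : ℕ} (hm : 1 ≤ m) :
    T + ∑ s ∈ range (m + 1), ξ s * K (m - s) = ∑ s ∈ range (m + 1), L (m - s) * ξ s ↔
      K m + (ξ m * D - D * ξ m) =
        L m - T + ∑ s ∈ Ico 1 m, (L (m - s) * ξ s - ξ s * K (m - s)) := by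
  have split_ends (f : ℕ → R) :
      ∑ s ∈ range (m + 1), f s = f 0 + ∑ s ∈ Ico 1 m, f s + f m := by
    rw [sum_range_succ, range_eq_Ico, sum_eq_sum_Ico_succ_bot hm]
  rw [split_ends, split_ends, ← sub_eq_zero, ← sub_eq_zero (a := K m + _)]
  simp only [hξ, hK, hL, Nat.sub_zero, Nat.sub_self, one_mul, mul_one, sum_sub_distrib]
  constructor <;> intro H <;> rw [← H] <;> abel

namespace Matrix

variable {n 𝕜 : Type*} [Fintype n] [DecidableEq n] [Field 𝕜]

def commDiagonalInv (k : n → 𝕜) (C : Matrix n n 𝕜) : Matrix n n 𝕜 :=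
  of fun i j => if i = j then 0 else C i j / (k j - k i)

theorem mul_diagonal_sub_diagonal_mul_apply (k : n → 𝕜) (ξ : Matrix n n 𝕜) (i j : n) :
    (ξ * diagonal k - diagonal k * ξ) i j = ξ i j * (k j - k i) := by
  simp only [sub_apply, mul_diagonal, diagonal_mul]
  ring

theorem isDiag_and_add_commutator_eq_iff {k : n → 𝕜} (hk : Injective k)
    (C D ξ : Matrix n n 𝕜) :
    (D.IsDiag ∧ (∀ i, ξ i i = 0) ∧ D + (ξ * diagonal k - diagonal k * ξ) = C) ↔
      D = diagonal C.diag ∧ ξ = commDiagonalInv k C := by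
  have hne {i j : n} (hij : i ≠ j) : k j - k i ≠ 0 := sub_ne_zero.2 (hk.ne (Ne.symm hij))
  constructor
  · rintro ⟨hD, hξ, rfl⟩
    constructor <;> ext i j <;>
      simp only [diagonal_apply, diag_apply, add_apply, mul_diagonal_sub_diagonal_mul_apply,
        commDiagonalInv, of_apply] <;> by_cases hij : i = j
    · simp [hij]
    · simp [hij, hD hij]
    · simp [hij, hξ]
    · simp [hij, hD hij, hne hij]
  · rintro ⟨rfl, rfl⟩
    refine ⟨isDiag_diagonal _, fun i => by simp [commDiagonalInv], ?_⟩
    ext i j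
    simp only [add_apply, mul_diagonal_sub_diagonal_mul_apply, commDiagonalInv, of_apply]
    by_cases hij : i = j
    · simp [hij]
    · simp [hij, hne hij]

end Matrix

section FormalSolution

variable {n 𝕜 : Type*} [Fintype n] [Field 𝕜]

def coeffRHS (h : ℕ) (L ξ K : ℕ → Matrix n n 𝕜) (m : ℕ) : Matrix n n 𝕜 :=
  L m - (if h + 1 ≤ m then ((m - h : ℕ) : 𝕜) • ξ (m - h) else 0) +
    ∑ s ∈ Ico 1 m, (L (m - s) * ξ s - ξ s * K (m - s))

theorem coeffRHS_congr {h : ℕ} (hh : 1 ≤ h) (L : ℕ → Matrix n n 𝕜)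
    {ξ K ξ' K' : ℕ → Matrix n n 𝕜} {m : ℕ} (hξ : ∀ j < m, ξ j = ξ' j)
    (hK : ∀ j < m, K j = K' j) :
    coeffRHS h L ξ K m = coeffRHS h L ξ' K' m := by
  unfold coeffRHS
  congr 1
  · split_ifs with hm
    · rw [hξ (m - h) (by omega)]
    · rfl
  · refine sum_congr rfl fun s hs => ?_
    have := mem_Ico.1 hs
    rw [hξ s (by omega), hK (m - s) (by omega)]

variable [DecidableEq n]

def IsFormalSolution (k : n → 𝕜) (h : ℕ) (L ξ K : ℕ → Matrix n n 𝕜) : Prop :=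
  ξ 0 = 1 ∧ (∀ m, 1 ≤ m → ∀ i, ξ m i i = 0) ∧ K 0 = diagonal k ∧
    (∀ m, 1 ≤ m → (K m).IsDiag) ∧
    ∀ m, 1 ≤ m → (if h + 1 ≤ m then ((m - h : ℕ) : 𝕜) • ξ (m - h) else 0) +
      ∑ s ∈ range (m + 1), ξ s * K (m - s) = ∑ s ∈ range (m + 1), L (m - s) * ξ s

def formalSolutionStep (k : n → 𝕜) (h : ℕ) (L : ℕ → Matrix n n 𝕜) (m : ℕ)
    (x : ℕ → Matrix n n 𝕜 × Matrix n n 𝕜) : Matrix n n 𝕜 × Matrix n n 𝕜 :=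
  if m = 0 then (1, diagonal k) else
    let C := coeffRHS h L (fun j => (x j).1) (fun j => (x j).2) m
    (commDiagonalInv k C, diagonal C.diag)

theorem formalSolutionStep_congr (k : n → 𝕜) {h : ℕ} (L : ℕ → Matrix n n 𝕜) (hh : 1 ≤ h)
    (m : ℕ) (x y : ℕ → Matrix n n 𝕜 × Matrix n n 𝕜) (hxy : ∀ j < m, x j = y j) :
    formalSolutionStep k h L m x = formalSolutionStep k h L m y := by
  unfold formalSolutionStep
  rw [coeffRHS_congr hh L (fun j hj => congrArg Prod.fst (hxy j hj))
    (fun j hj => congrArg Prod.snd (hxy j hj))]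

variable {k : n → 𝕜} {h : ℕ} {L ξ K : ℕ → Matrix n n 𝕜}

theorem formalSolutionStep_iff (hk : Injective k) (hL : L 0 = diagonal k) (hξ : ξ 0 = 1)
    (hK : K 0 = diagonal k) {m : ℕ} (hm : 1 ≤ m) :
    ((K m).IsDiag ∧ (∀ i, ξ m i i = 0) ∧
      (if h + 1 ≤ m then ((m - h : ℕ) : 𝕜) • ξ (m - h) else 0) +
        ∑ s ∈ range (m + 1), ξ s * K (m - s) = ∑ s ∈ range (m + 1), L (m - s) * ξ s) ↔
      (ξ m, K m) = formalSolutionStep k h L m fun j => (ξ j, K j) := by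
  rw [add_sum_mul_eq_sum_mul_iff hξ hK hL hm, isDiag_and_add_commutator_eq_iff hk,
    formalSolutionStep, if_neg (show m ≠ 0 by omega), Prod.mk.injEq, and_comm]
  rfl

theorem isFormalSolution_iff (hk : Injective k) (hL : L 0 = diagonal k) :
    IsFormalSolution k h L ξ K ↔
      ∀ m, (ξ m, K m) = formalSolutionStep k h L m fun j => (ξ j, K j) := by
  constructor
  · rintro ⟨hξ, hξd, hK, hKd, heq⟩ m
    rcases Nat.eq_zero_or_pos m with rfl | hm
    · simp [formalSolutionStep, hξ, hK]
    · exact (formalSolutionStep_iff hk hL hξ hK hm).1 ⟨hKd m hm, hξd m hm, heq m hm⟩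
  · intro H
    obtain ⟨hξ, hK⟩ : ξ 0 = 1 ∧ K 0 = diagonal k := by
      simpa [formalSolutionStep] using H 0
    have step m (hm : 1 ≤ m) := (formalSolutionStep_iff hk hL hξ hK hm).2 (H m)
    exact ⟨hξ, fun m hm => (step m hm).2.1, hK, fun m hm => (step m hm).1,
      fun m hm => (step m hm).2.2⟩

end FormalSolution

theorem stmt_4_general (r h : ℕ) (hh : 1 ≤ h)
    (k : Fin r → ℂ) (hk : ∀ i j, i ≠ j → k i ≠ k j)
    (L : ℕ → Matrix (Fin r) (Fin r) ℂ)
    (hL0 : L 0 = Matrix.diagonal k) :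
    ∃! p : (ℕ → Matrix (Fin r) (Fin r) ℂ) × (ℕ → Matrix (Fin r) (Fin r) ℂ),
      p.1 0 = 1 ∧
      (∀ n, 1 ≤ n → ∀ i, p.1 n i i = 0) ∧
      p.2 0 = Matrix.diagonal k ∧
      (∀ m, 1 ≤ m → (p.2 m).IsDiag) ∧
      (∀ m, 1 ≤ m →
        (if h + 1 ≤ m then (((m - h : ℕ) : ℂ) • p.1 (m - h)) else 0)
          + ∑ s ∈ Finset.range (m + 1), p.1 s * p.2 (m - s)
          = ∑ s ∈ Finset.range (m + 1), L (m - s) * p.1 s) := by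
  have hk' : Injective k := fun i j hij => by_contra fun hne => hk i j hne hij
  have hrec := Nat.existsUnique_forall_eq_of_strongRec _ (formalSolutionStep_congr k L hh)
  exact ((Equiv.arrowProdEquivProdArrow ℕ _ _).existsUnique_congr
    fun x => (isFormalSolution_iff hk' hL0).symm).1 hrec

/-- Paper's Lemma 3.1 at an irregular singularity of order `h+1` (diagonal frame), with
all indices shifted by `h` so that sequences are indexed by `ℕ`: the sequence `m ↦ L m`
represents `(L_{m−h})_{m≥0}` (so `L 0 = L_{−h} = K`), `p.1 n` represents `ξ_n` (with
`ξ₀ = 1`), and `p.2 m` represents `K_{m−h}` (with `p.2 0 = K`). For each `m ≥ 1`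
(i.e. `n = m − h > −h`) the coefficient equation
`[n ξ_n when n ≥ 1] + Σ_{s=0}^{n+h} ξ_s K_{n−s} = Σ_{s=0}^{n+h} L_{n−s} ξ_s` holds, and
the pair of sequences `(ξ, K)` with zero-diagonal `ξ_n` and diagonal `K_n` is unique. -/
theorem stmt_4 (r h : ℕ) (hr : 1 ≤ r) (hh : 1 ≤ h)
    (k : Fin r → ℂ) (hk : ∀ i j, i ≠ j → k i ≠ k j)
    (L : ℕ → Matrix (Fin r) (Fin r) ℂ)
    (hL0 : L 0 = Matrix.diagonal k) :
    ∃! p : (ℕ → Matrix (Fin r) (Fin r) ℂ) × (ℕ → Matrix (Fin r) (Fin r) ℂ),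
      p.1 0 = 1 ∧
      (∀ n, 1 ≤ n → ∀ i, p.1 n i i = 0) ∧
      p.2 0 = Matrix.diagonal k ∧
      (∀ m, 1 ≤ m → (p.2 m).IsDiag) ∧
      (∀ m, 1 ≤ m →
        (if h + 1 ≤ m then (((m - h : ℕ) : ℂ) • p.1 (m - h)) else 0)
          + ∑ s ∈ Finset.range (m + 1), p.1 s * p.2 (m - s)
          = ∑ s ∈ Finset.range (m + 1), L (m - s) * p.1 s) :=
  stmt_4_general r h hh k hk L hL0
end

section
/- Let N ≥ 2, let t₁, …, t_N ∈ ℂ be distinct, set P(z) := ∏_{i=1}^N (z − t_i), and let q₁, …, q_{N−1} ∈ ℂ be distinct complex numbers such that P′(z) = N·∏_{k=1}^{N−1}(z − q_k). Then for all indices i, j, m ∈ {1, …, N} with i ≠ j and m ≠ j, the following identity holds: Σ_{k=1}^{N−1} ∏_{s ≠ i, j}(q_k − t_s) / [ (q_k − t_m)·∏_{l ≠ k}(q_k − q_l) ] equals −N/(t_i − t_j) when m = i, and equals 0 when m ∉ {i, j}. (All denominators are nonzero: q_k ≠ t_m since P′(t_m) = ∏_{s≠m}(t_m − t_s) ≠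 0. These are the residue identities (s8)–(s9) underlying the equivalence between the Schlesinger equations ∂_i A_j = [A_i, A_j]/(t_i − t_j) and the flows ∂_{T_k} A_j in the critical-value coordinates T_k.) -/
/-!
Put `A(z) = ∏_{s ≠ i, j} (z - t s)`, of degree `N - 2 < N - 1`. By Lagrange interpolation at the
nodes `q k`, the sum is minus the partial-fraction expansion of `A(z) / ∏_k (z - q k)` at
`z = t m`. Since `P'(t m) = ∏_{s ≠ m} (t m - t s) = N ∏_k (t m - q k)`, its value is
`-N A(t m) / P'(t m)`: zero when `m ∉ {i, j}` (then `A(t m) = 0`), and `-N / (t i - t j)` when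
`m = i`, because then `P'(t i) = (t i - t j) A(t i)`.
-/

open Finset Polynomial

namespace Lagrange

variable {F : Type*} [Field F] {ι : Type*} [DecidableEq ι]

theorem sum_eval_div_sub_mul_prod_sub {s : Finset ι} {v : ι → F} (hvs : Set.InjOn v s)
    {A : F[X]} (hA : A.degree < #s) {x : F} (hx : ∀ i ∈ s, x ≠ v i) :
    ∑ i ∈ s, A.eval (v i) / ((v i - x) * ∏ j ∈ s.erase i, (v i - v j))
      = -A.eval x / ∏ i ∈ s, (x - v i) := by
  have hbary := eval_interpolate_not_at_node (fun i => A.eval (v i)) hx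
  rw [← eq_interpolate hvs hA, eval_nodal] at hbary
  have hnodal : ∏ i ∈ s, (x - v i) ≠ 0 := prod_ne_zero_iff.2 fun i hi => sub_ne_zero.2 (hx i hi)
  rw [hbary, neg_div, mul_div_cancel_left₀ _ hnodal, ← sum_neg_distrib]
  refine sum_congr rfl fun i _ => ?_
  rw [nodalWeight, prod_inv_distrib, ← neg_sub x, div_eq_mul_inv, mul_inv, inv_neg]
  ring

theorem sum_prod_erase_sub_at_node (s : Finset ι) (v : ι → F) {m : ι} (hm : m ∈ s) :
    ∑ i ∈ s, ∏ k ∈ s.erase i, (v m - v k) = ∏ k ∈ s.erase m, (v m - v k) := by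
  simpa only [derivative_nodal, eval_finsetSum, eval_nodal] using
    eval_nodal_derivative_eval_node_eq (v := v) hm

end Lagrange

open Lagrange

theorem stmt_9_general (N : ℕ)
    (t : Fin N → ℂ) (ht : Function.Injective t)
    (q : Fin (N - 1) → ℂ) (hq : Function.Injective q)
    (hP' : ∀ z : ℂ,
      (∑ i, ∏ s ∈ Finset.univ.erase i, (z - t s)) = (N : ℂ) * ∏ l, (z - q l)) :
    ∀ i j m : Fin N, i ≠ j → m ≠ j →
      (∑ l, (∏ s ∈ (Finset.univ.erase i).erase j, (q l - t s)) /
            ((q l - t m) * ∏ l' ∈ Finset.univ.erase l, (q l - q l')))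
        = if m = i then -(N : ℂ) / (t i - t j) else 0 := by
  intro i j m hij hmj
  have hderiv : ∏ s ∈ univ.erase m, (t m - t s) = N * ∏ l, (t m - q l) :=
    (sum_prod_erase_sub_at_node univ t (mem_univ m)).symm.trans (hP' (t m))
  have hderiv_ne : ∏ s ∈ univ.erase m, (t m - t s) ≠ 0 :=
    prod_ne_zero_iff.2 fun s hs => sub_ne_zero.2 (ht.ne (mem_erase.1 hs).1.symm)
  have hcrit_ne : ∏ l, (t m - q l) ≠ 0 := right_ne_zero_of_mul (hderiv ▸ hderiv_ne)
  have hj : j ∈ univ.erase i := mem_erase.2 ⟨hij.symm, mem_univ j⟩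
  have hdeg : (nodal ((univ.erase i).erase j) t).degree < #(univ : Finset (Fin (N - 1))) := by
    have hcard : #(univ.erase i) = N - 1 := by simp
    rw [degree_nodal, card_univ, Fintype.card_fin, ← hcard]
    exact_mod_cast card_erase_lt_of_mem hj
  have hpartial := sum_eval_div_sub_mul_prod_sub hq.injOn hdeg
    fun l _ => sub_ne_zero.1 (prod_ne_zero_iff.1 hcrit_ne l (mem_univ l))
  simp only [eval_nodal] at hpartial
  rw [hpartial]
  split_ifs with hmi
  · subst hmi
    rw [← mul_prod_erase _ _ hj] at hderiv
    rw [div_eq_div_iff hcrit_ne (sub_ne_zero.2 (ht.ne hij))]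
    linear_combination -hderiv
  · rw [prod_eq_zero (mem_erase.2 ⟨hmj, mem_erase.2 ⟨hmi, mem_univ m⟩⟩) (sub_self _)]
    simp

/-- Residue identities (s8)–(s9) underlying the equivalence between the Schlesinger
equations and the flows in the critical-value coordinates: with `P(z) = ∏(z − t_i)`,
`P′(z) = N·∏(z − q_k)`, for `i ≠ j` and `m ≠ j`,
`Σ_k ∏_{s≠i,j}(q_k − t_s) / ((q_k − t_m)·∏_{l≠k}(q_k − q_l))` equals `−N/(t_i − t_j)`
if `m = i` and `0` if `m ∉ {i, j}`. -/
theorem stmt_9 (N : ℕ) (hN : 2 ≤ N)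
    (t : Fin N → ℂ) (ht : Function.Injective t)
    (q : Fin (N - 1) → ℂ) (hq : Function.Injective q)
    (hP' : ∀ z : ℂ,
      (∑ i, ∏ s ∈ Finset.univ.erase i, (z - t s)) = (N : ℂ) * ∏ l, (z - q l)) :
    ∀ i j m : Fin N, i ≠ j → m ≠ j →
      (∑ l, (∏ s ∈ (Finset.univ.erase i).erase j, (q l - t s)) /
            ((q l - t m) * ∏ l' ∈ Finset.univ.erase l, (q l - q l')))
        = if m = i then -(N : ℂ) / (t i - t j) else 0 :=
  stmt_9_general N t ht q hq hP'
end

section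
/- Let ν ∈ ℂ and let u : ℝ → ℂ be twice differentiable. Define the Pauli matrices σ₁ = [[0,1],[1,0]], σ₂ = [[0,−i],[i,0]], σ₃ = [[1,0],[0,−1]], and set A := −4i·σ₃, B(x) := −4u(x)·σ₂, C(x) := −i(2u(x)² + x)·σ₃ − 2u′(x)·σ₁, D := ν·σ₂. For x ∈ ℝ and z ∈ ℂ \ {0} define L(x, z) := A z² + B(x) z + C(x) + D z⁻¹ and M(x, z) := −i z·σ₃ − u(x)·σ₂. Then the zero-curvature equation ∂_x L(x, z) − ∂_z M(x, z) + [L(x, z), M(x, z)] = 0 holds for all x ∈ ℝ and all z ≠ 0 if and only if u satisfies the Painlevé-II equation u″(x) − x·u(x) − 2u(x)³ = ν for all x ∈ ℝ. (This is the Lax representation of Painlevé II via the isomonodromy deformation of the rational connection (p3) with one irregular singularity, as in Example 2 of the paper.) -/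
/-!
Expand `L` and `M` in the Pauli basis, `L = α σ₁ + β σ₂ + γ σ₃`. Since
`[σ_a, σ_b] = 2i ε_{abc} σ_c`, the commutator of two such combinations is `2i` times the cross
product of their coefficient vectors, so the zero-curvature expression is again a Pauli
combination with scalar coefficients. Its `σ₂`- and `σ₃`-components vanish identically, and its
`σ₁`-component is `-2 (u″ - x u - 2 u³ - ν)`, independently of `z ≠ 0`.
-/

/-- Pauli matrix σ₁. -/
noncomputable def pauli1 : Matrix (Fin 2) (Fin 2) ℂ := !![0, 1; 1, 0]

/-- Pauli matrix σ₂. -/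
noncomputable def pauli2 : Matrix (Fin 2) (Fin 2) ℂ := !![0, -Complex.I; Complex.I, 0]

/-- Pauli matrix σ₃. -/
noncomputable def pauli3 : Matrix (Fin 2) (Fin 2) ℂ := !![1, 0; 0, -1]

/-- The Lax matrix `L(x,z) = Az² + B(x)z + C(x) + Dz⁻¹` of the Painlevé-II isomonodromy
problem, with `A = −4iσ₃`, `B = −4uσ₂`, `C = −i(2u² + x)σ₃ − 2u′σ₁`, `D = νσ₂`. -/
noncomputable def painleveL (ν : ℂ) (u : ℝ → ℂ) (x : ℝ) (z : ℂ) :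
    Matrix (Fin 2) (Fin 2) ℂ :=
  z ^ 2 • ((-(4 * Complex.I)) • pauli3)
    + z • ((-(4 * u x)) • pauli2)
    + ((-(Complex.I * (2 * u x ^ 2 + (x : ℂ)))) • pauli3 + (-(2 * deriv u x)) • pauli1)
    + z⁻¹ • (ν • pauli2)

/-- The second Lax matrix `M(x,z) = −izσ₃ − u(x)σ₂`. -/
noncomputable def painleveM (u : ℝ → ℂ) (x : ℝ) (z : ℂ) : Matrix (Fin 2) (Fin 2) ℂ :=
  (-(Complex.I * z)) • pauli3 + (-(u x)) • pauli2

open Complex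

lemma pauli1_mul_pauli2 : pauli1 * pauli2 = I • pauli3 := by
  simp [pauli1, pauli2, pauli3]

lemma pauli2_mul_pauli1 : pauli2 * pauli1 = -I • pauli3 := by
  simp [pauli1, pauli2, pauli3]

lemma pauli2_mul_pauli3 : pauli2 * pauli3 = I • pauli1 := by
  simp [pauli1, pauli2, pauli3]

lemma pauli3_mul_pauli2 : pauli3 * pauli2 = -I • pauli1 := by
  simp [pauli1, pauli2, pauli3]

lemma pauli3_mul_pauli1 : pauli3 * pauli1 = I • pauli2 := by
  simp [pauli1, pauli2, pauli3]

lemma pauli1_mul_pauli3 : pauli1 * pauli3 = -I • pauli2 := by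
  simp [pauli1, pauli2, pauli3]

noncomputable def pauliComb (a b c : ℂ) : Matrix (Fin 2) (Fin 2) ℂ :=
  a • pauli1 + b • pauli2 + c • pauli3

lemma pauliComb_apply (a b c : ℂ) (i j : Fin 2) :
    pauliComb a b c i j = a * pauli1 i j + b * pauli2 i j + c * pauli3 i j := by
  simp [pauliComb]

lemma pauliComb_eq_zero_iff {a b c : ℂ} : pauliComb a b c = 0 ↔ a = 0 ∧ b = 0 ∧ c = 0 := by
  refine ⟨fun h => ?_, by rintro ⟨rfl, rfl, rfl⟩; simp [pauliComb]⟩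
  have h00 : c = 0 := by
    simpa [pauliComb, pauli1, pauli2, pauli3] using congr_fun₂ h 0 0
  have h01 : a + -(b * I) = 0 := by
    simpa [pauliComb, pauli1, pauli2, pauli3] using congr_fun₂ h 0 1
  have h10 : a + b * I = 0 := by
    simpa [pauliComb, pauli1, pauli2, pauli3] using congr_fun₂ h 1 0
  exact ⟨by linear_combination (h01 + h10) / 2,
    by linear_combination (h10 - h01) * (-I) / 2 + b * I_sq, h00⟩

lemma pauliComb_add (a b c a' b' c' : ℂ) :
    pauliComb a b c + pauliComb a' b' c' = pauliComb (a + a') (b + b') (c + c') := by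
  simp only [pauliComb, add_smul]
  abel

lemma pauliComb_sub (a b c a' b' c' : ℂ) :
    pauliComb a b c - pauliComb a' b' c' = pauliComb (a - a') (b - b') (c - c') := by
  simp only [pauliComb, sub_smul]
  abel

lemma pauliComb_commutator (a b c a' b' c' : ℂ) :
    pauliComb a b c * pauliComb a' b' c' - pauliComb a' b' c' * pauliComb a b c
      = pauliComb (2 * I * (b * c' - c * b')) (2 * I * (c * a' - a * c'))
          (2 * I * (a * b' - b * a')) := by
  simp only [pauliComb, add_mul, mul_add, Matrix.smul_mul, Matrix.mul_smul, pauli1_mul_pauli2,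
    pauli2_mul_pauli1, pauli2_mul_pauli3, pauli3_mul_pauli2, pauli3_mul_pauli1, pauli1_mul_pauli3]
  module

section Derivatives

variable {𝕜 : Type*} [NontriviallyNormedField 𝕜] [NormedAlgebra 𝕜 ℂ]
  {a b c : 𝕜 → ℂ} {a' b' c' : ℂ} {t : 𝕜}

lemma hasDerivAt_pauliComb_apply (ha : HasDerivAt a a' t) (hb : HasDerivAt b b' t)
    (hc : HasDerivAt c c' t) (i j : Fin 2) :
    HasDerivAt (fun s => pauliComb (a s) (b s) (c s) i j) (pauliComb a' b' c' i j) t := by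
  simp only [pauliComb_apply]
  exact ((ha.mul_const _).add (hb.mul_const _)).add (hc.mul_const _)

lemma of_deriv_pauliComb_apply (ha : HasDerivAt a a' t) (hb : HasDerivAt b b' t)
    (hc : HasDerivAt c c' t) :
    Matrix.of (fun i j => deriv (fun s => pauliComb (a s) (b s) (c s) i j) t)
      = pauliComb a' b' c' := by
  ext i j
  exact (hasDerivAt_pauliComb_apply ha hb hc i j).deriv

end Derivatives

lemma painleveL_eq_pauliComb (ν : ℂ) (u : ℝ → ℂ) (x : ℝ) (z : ℂ) :
    painleveL ν u x z = pauliComb (-2 * deriv u x) (-4 * u x * z + ν * z⁻¹)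
      (-4 * I * z ^ 2 - I * (2 * u x ^ 2 + x)) := by
  simp only [painleveL, pauliComb, smul_smul, add_smul, sub_smul]
  module

lemma painleveM_eq_pauliComb (u : ℝ → ℂ) (x : ℝ) (z : ℂ) :
    painleveM u x z = pauliComb 0 (-u x) (-I * z) := by
  simp [painleveM, pauliComb, add_comm]

lemma of_deriv_painleveL {ν : ℂ} {u : ℝ → ℂ} {x : ℝ} (hu : DifferentiableAt ℝ u x)
    (hu' : DifferentiableAt ℝ (deriv u) x) (z : ℂ) :
    Matrix.of (fun i j => deriv (fun x' : ℝ => painleveL ν u x' z i j) x)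
      = pauliComb (-2 * deriv (deriv u) x) (-4 * deriv u x * z)
          (-(I * (4 * u x * deriv u x + 1))) := by
  simp only [painleveL_eq_pauliComb]
  have hsq : HasDerivAt (fun x' : ℝ => 2 * u x' ^ 2 + (x' : ℂ)) (4 * u x * deriv u x + 1) x :=
    (((hu.hasDerivAt.fun_pow 2).const_mul 2).add (hasDerivAt_id' x).ofReal_comp).congr_deriv
      (by push_cast; ring)
  refine of_deriv_pauliComb_apply (hu'.hasDerivAt.const_mul _)
    (((hu.hasDerivAt.const_mul _).mul_const z).add_const _) ?_
  exact (hsq.const_mul I).const_sub _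

lemma of_deriv_painleveM (u : ℝ → ℂ) (x : ℝ) (z : ℂ) :
    Matrix.of (fun i j => deriv (fun z' : ℂ => painleveM u x z' i j) z)
      = pauliComb 0 0 (-I) := by
  simp only [painleveM_eq_pauliComb]
  exact of_deriv_pauliComb_apply (hasDerivAt_const z 0) (hasDerivAt_const z _)
    (((hasDerivAt_id' z).const_mul (-I)).congr_deriv (mul_one _))

lemma zeroCurvature_painleve_eq {ν : ℂ} {u : ℝ → ℂ} {x : ℝ}
    (hu : DifferentiableAt ℝ u x) (hu' : DifferentiableAt ℝ (deriv u) x) {z : ℂ} (hz : z ≠ 0) :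
    Matrix.of (fun i j => deriv (fun x' : ℝ => painleveL ν u x' z i j) x)
        - Matrix.of (fun i j => deriv (fun z' : ℂ => painleveM u x z' i j) z)
        + (painleveL ν u x z * painleveM u x z - painleveM u x z * painleveL ν u x z)
      = pauliComb (-2 * (deriv (deriv u) x - x * u x - 2 * u x ^ 3 - ν)) 0 0 := by
  rw [of_deriv_painleveL hu hu', of_deriv_painleveM, painleveL_eq_pauliComb,
    painleveM_eq_pauliComb, pauliComb_commutator, pauliComb_sub, pauliComb_add]
  congr 1
  -- `z ≠ 0` enters only here, where `ν z⁻¹ σ₂` in `L` meets `-i z σ₃` in `M`.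
  · linear_combination (-2 * (2 * u x ^ 3 + x * u x + ν * z * z⁻¹)) * I_sq
      + 2 * ν * mul_inv_cancel₀ hz
  · linear_combination (-4 * deriv u x * z) * I_sq
  · ring

/-- Lax representation of Painlevé II (Example 2 of the paper): the zero-curvature
equation `∂_x L − ∂_z M + [L, M] = 0` holds for all `x ∈ ℝ`, `z ≠ 0` if and only if
`u″ − xu − 2u³ = ν`. -/
theorem stmt_10 (ν : ℂ) (u : ℝ → ℂ)
    (hu : Differentiable ℝ u) (hu' : Differentiable ℝ (deriv u)) :
    (∀ (x : ℝ) (z : ℂ), z ≠ 0 →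
      Matrix.of (fun i j => deriv (fun x' : ℝ => painleveL ν u x' z i j) x)
        - Matrix.of (fun i j => deriv (fun z' : ℂ => painleveM u x z' i j) z)
        + (painleveL ν u x z * painleveM u x z - painleveM u x z * painleveL ν u x z)
        = 0)
    ↔ (∀ x : ℝ, deriv (deriv u) x - (x : ℂ) * u x - 2 * u x ^ 3 = ν) := by
  refine ⟨fun h x => ?_, fun h x z hz => ?_⟩
  · have h1 := h x 1 one_ne_zero
    rw [zeroCurvature_painleve_eq (hu x) (hu' x) one_ne_zero, pauliComb_eq_zero_iff] at h1
    linear_combination h1.1 / -2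
  · rw [zeroCurvature_painleve_eq (hu x) (hu' x) hz, h x, sub_self, mul_zero]
    exact pauliComb_eq_zero_iff.mpr ⟨rfl, rfl, rfl⟩
end

section
/- Let r ≥ 1 and let A, B : U → GL_r(ℂ) be differentiable maps on an open set U ⊆ ℝ² with coordinates (u₁, u₂), and set J := B⁻¹A⁻¹BA. Then, pointwise on U: −Tr( A⁻¹δA ∧ δ(BJ)·J⁻¹B⁻¹ ) − Tr( (A⁻¹B⁻¹δ(BA) − A⁻¹δA) ∧ δ(A⁻¹J)·J⁻¹A ) = Tr( B⁻¹δB ∧ δA·A⁻¹ − A⁻¹δA ∧ δB·B⁻¹ + δJ·J⁻¹ ∧ B⁻¹A⁻¹δ(AB) ). (This identity — the computation (ct2)–(ct4a) of the paper — evaluates the sum of the contributions I₁ and I₂ of the a- and b-segments of the loop aba⁻¹b⁻¹ to the integral of Ω₀, and yields the two-form χ(A, B) of formula (x) expressing the symplectic structure in terms of the monodromy matrices on a once-punctured elliptic curve.) -/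
/-
With α = A⁻¹δA, β = B⁻¹δB and θ = δJ·J⁻¹, the product rule and δ(A⁻¹) = −A⁻¹δA·A⁻¹ turn every
one-form of the identity into a sum of α, β, θ, δA·A⁻¹, δB·B⁻¹ conjugated by A or B. The pairing
Tr(· ∧ ·) is antisymmetric and satisfies Tr(QxP ∧ y) = Tr(x ∧ PyQ) by cyclicity of the trace; these
two rules match the two sides term by term, for any invertible J.
-/

/-- Partial derivative in the first parameter `u₁` of a matrix-valued map on `ℝ²`,
computed entrywise. -/
noncomputable def mpd1 {r : ℕ} (X : ℝ × ℝ → Matrix (Fin r) (Fin r) ℂ) (u : ℝ × ℝ) :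
    Matrix (Fin r) (Fin r) ℂ :=
  Matrix.of fun i j => deriv (fun s => X (s, u.2) i j) u.1

/-- Partial derivative in the second parameter `u₂` of a matrix-valued map on `ℝ²`,
computed entrywise. -/
noncomputable def mpd2 {r : ℕ} (X : ℝ × ℝ → Matrix (Fin r) (Fin r) ℂ) (u : ℝ × ℝ) :
    Matrix (Fin r) (Fin r) ℂ :=
  Matrix.of fun i j => deriv (fun s => X (u.1, s) i j) u.2

/-- The scalar `Tr(α ∧ β) = Tr(α₁β₂ − α₂β₁)` for matrix-valued 1-forms
`α = (α₁, α₂)`, `β = (β₁, β₂)` on `ℝ²`. -/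
noncomputable def wedgeTr {r : ℕ} (α₁ α₂ β₁ β₂ : Matrix (Fin r) (Fin r) ℂ) : ℂ :=
  (α₁ * β₂ - α₂ * β₁).trace

/-- The monodromy `J = B⁻¹A⁻¹BA` around the puncture. -/
noncomputable def commJ {r : ℕ} (A B : ℝ × ℝ → Matrix (Fin r) (Fin r) ℂ)
    (v : ℝ × ℝ) : Matrix (Fin r) (Fin r) ℂ :=
  (B v)⁻¹ * (A v)⁻¹ * B v * A v

open Matrix Filter Topology

section EntrywiseCalculus

variable {𝕜 E 𝔽 n : Type*} [NontriviallyNormedField 𝕜] [NormedAddCommGroup E] [NormedSpace 𝕜 E]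
  [NormedField 𝔽] [NormedAlgebra 𝕜 𝔽]

variable (𝕜) in
def EntrywiseDifferentiableAt (X : E → Matrix n n 𝔽) (u : E) : Prop :=
  ∀ i j, DifferentiableAt 𝕜 (fun v => X v i j) u

namespace EntrywiseDifferentiableAt

variable {X Y : E → Matrix n n 𝔽} {u : E}

lemma mul [Fintype n] (hX : EntrywiseDifferentiableAt 𝕜 X u)
    (hY : EntrywiseDifferentiableAt 𝕜 Y u) :
    EntrywiseDifferentiableAt 𝕜 (fun v => X v * Y v) u := fun i j => by
  simp only [mul_apply]
  exact DifferentiableAt.fun_sum fun k _ => (hX i k).mul (hY k j)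

lemma differentiableAt_det [Fintype n] [DecidableEq n] (hX : EntrywiseDifferentiableAt 𝕜 X u) :
    DifferentiableAt 𝕜 (fun v => (X v).det) u := by
  simp only [det_apply']
  have hentries : ∀ i j, DifferentiableAt 𝕜 (fun v => X v i j) u := hX
  fun_prop

lemma inv [Fintype n] [DecidableEq n] (hX : EntrywiseDifferentiableAt 𝕜 X u)
    (hu : IsUnit (X u)) :
    EntrywiseDifferentiableAt 𝕜 (fun v => (X v)⁻¹) u := fun i j => by
  simp only [inv_def, Matrix.smul_apply, Ring.inverse_eq_inv', smul_eq_mul, adjugate_apply]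
  have hrow : EntrywiseDifferentiableAt 𝕜 (fun v => (X v).updateRow j (Pi.single i 1)) u :=
    fun i' j' => by
      by_cases h : i' = j
      · subst h
        simp only [updateRow_self]
        exact differentiableAt_const _
      · simp only [updateRow_ne h]
        exact hX i' j'
  exact (hX.differentiableAt_det.inv ((isUnit_iff_isUnit_det _).mp hu).ne_zero).mul
    hrow.differentiableAt_det

lemma comp {γ : 𝕜 → E} {t : 𝕜} (hX : EntrywiseDifferentiableAt 𝕜 X (γ t))
    (hγ : DifferentiableAt 𝕜 γ t) : EntrywiseDifferentiableAt 𝕜 (fun s => X (γ s)) t :=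
  fun i j => (hX i j).comp t hγ

end EntrywiseDifferentiableAt

noncomputable def entrywiseDeriv (g : 𝕜 → Matrix n n 𝔽) (t : 𝕜) : Matrix n n 𝔽 :=
  Matrix.of fun i j => deriv (fun s => g s i j) t

variable {g h : 𝕜 → Matrix n n 𝔽} {t : 𝕜}

lemma entrywiseDeriv_congr (he : g =ᶠ[𝓝 t] h) : entrywiseDeriv g t = entrywiseDeriv h t := by
  ext i j
  exact (he.fun_comp fun M => M i j).deriv_eq

lemma entrywiseDeriv_const (M : Matrix n n 𝔽) : entrywiseDeriv (fun _ => M) t = 0 := by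
  ext i j
  simp [entrywiseDeriv]

variable [Fintype n]

lemma entrywiseDeriv_mul (hg : EntrywiseDifferentiableAt 𝕜 g t)
    (hh : EntrywiseDifferentiableAt 𝕜 h t) :
    entrywiseDeriv (fun s => g s * h s) t =
      entrywiseDeriv g t * h t + g t * entrywiseDeriv h t := by
  ext i j
  simp only [entrywiseDeriv, of_apply, Matrix.add_apply, mul_apply, ← Finset.sum_add_distrib]
  rw [deriv_fun_sum fun k _ => (hg i k).fun_mul (hh k j)]
  exact Finset.sum_congr rfl fun k _ => deriv_fun_mul (hg i k) (hh k j)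

lemma entrywiseDeriv_inv [DecidableEq n] (hg : EntrywiseDifferentiableAt 𝕜 g t)
    (hu : ∀ᶠ s in 𝓝 t, IsUnit (g s)) :
    entrywiseDeriv (fun s => (g s)⁻¹) t = -((g t)⁻¹ * entrywiseDeriv g t * (g t)⁻¹) := by
  have hdet : IsUnit (g t).det := (isUnit_iff_isUnit_det _).mp hu.self_of_nhds
  have hprod : entrywiseDeriv g t * (g t)⁻¹ + g t * entrywiseDeriv (fun s => (g s)⁻¹) t = 0 := by
    rw [← entrywiseDeriv_mul hg (hg.inv hu.self_of_nhds), ← entrywiseDeriv_const (t := t) 1]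
    exact entrywiseDeriv_congr (hu.mono fun s hs =>
      mul_nonsing_inv _ ((isUnit_iff_isUnit_det _).mp hs))
  calc entrywiseDeriv (fun s => (g s)⁻¹) t
      = (g t)⁻¹ * (g t * entrywiseDeriv (fun s => (g s)⁻¹) t) :=
        (nonsing_inv_mul_cancel_left _ _ hdet).symm
    _ = -((g t)⁻¹ * entrywiseDeriv g t * (g t)⁻¹) := by
        rw [eq_neg_of_add_eq_zero_right hprod, mul_neg, mul_assoc]

end EntrywiseCalculus

section WedgeTrace

variable {r : ℕ}

lemma wedgeTr_add_right (x₁ x₂ y₁ y₂ z₁ z₂ : Matrix (Fin r) (Fin r) ℂ) :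
    wedgeTr x₁ x₂ (y₁ + z₁) (y₂ + z₂) = wedgeTr x₁ x₂ y₁ y₂ + wedgeTr x₁ x₂ z₁ z₂ := by
  simp only [wedgeTr, mul_add, trace_sub, trace_add]
  ring

lemma wedgeTr_sub_right (x₁ x₂ y₁ y₂ z₁ z₂ : Matrix (Fin r) (Fin r) ℂ) :
    wedgeTr x₁ x₂ (y₁ - z₁) (y₂ - z₂) = wedgeTr x₁ x₂ y₁ y₂ - wedgeTr x₁ x₂ z₁ z₂ := by
  simp only [wedgeTr, mul_sub, trace_sub]
  ring

lemma wedgeTr_comm (x₁ x₂ y₁ y₂ : Matrix (Fin r) (Fin r) ℂ) :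
    wedgeTr x₁ x₂ y₁ y₂ = -wedgeTr y₁ y₂ x₁ x₂ := by
  simp only [wedgeTr, trace_sub, trace_mul_comm x₁, trace_mul_comm x₂]
  ring

lemma wedgeTr_mul_mul_left (P Q x₁ x₂ y₁ y₂ : Matrix (Fin r) (Fin r) ℂ) :
    wedgeTr (Q * x₁ * P) (Q * x₂ * P) y₁ y₂ = wedgeTr x₁ x₂ (P * y₁ * Q) (P * y₂ * Q) := by
  simp only [wedgeTr, trace_sub, mul_assoc, trace_mul_comm Q]

lemma wedgeTr_conj {A : Matrix (Fin r) (Fin r) ℂ} (hA : IsUnit A.det)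
    (x₁ x₂ y₁ y₂ : Matrix (Fin r) (Fin r) ℂ) :
    wedgeTr (A⁻¹ * x₁ * A) (A⁻¹ * x₂ * A) (A⁻¹ * y₁ * A) (A⁻¹ * y₂ * A) =
      wedgeTr x₁ x₂ y₁ y₂ := by
  rw [wedgeTr_mul_mul_left]
  simp only [mul_assoc, mul_nonsing_inv_cancel_left _ _ hA, mul_nonsing_inv _ hA, mul_one]

end WedgeTrace

/- The theorem after the product rule, with `aₖ, bₖ, jₖ` standing for `∂ₖA, ∂ₖB, ∂ₖJ`. -/
lemma wedgeTr_segments_eq {r : ℕ} {A B J : Matrix (Fin r) (Fin r) ℂ}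
    (hA : IsUnit A.det) (hB : IsUnit B.det) (hJ : IsUnit J.det)
    (a₁ a₂ b₁ b₂ j₁ j₂ : Matrix (Fin r) (Fin r) ℂ) :
    -wedgeTr (A⁻¹ * a₁) (A⁻¹ * a₂)
        ((b₁ * J + B * j₁) * (J⁻¹ * B⁻¹)) ((b₂ * J + B * j₂) * (J⁻¹ * B⁻¹))
      - wedgeTr (A⁻¹ * B⁻¹ * (b₁ * A + B * a₁) - A⁻¹ * a₁)
          (A⁻¹ * B⁻¹ * (b₂ * A + B * a₂) - A⁻¹ * a₂)
        ((-(A⁻¹ * a₁ * A⁻¹) * J + A⁻¹ * j₁) * (J⁻¹ * A))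
        ((-(A⁻¹ * a₂ * A⁻¹) * J + A⁻¹ * j₂) * (J⁻¹ * A))
    = wedgeTr (B⁻¹ * b₁) (B⁻¹ * b₂) (a₁ * A⁻¹) (a₂ * A⁻¹)
      - wedgeTr (A⁻¹ * a₁) (A⁻¹ * a₂) (b₁ * B⁻¹) (b₂ * B⁻¹)
      + wedgeTr (j₁ * J⁻¹) (j₂ * J⁻¹)
        (B⁻¹ * A⁻¹ * (a₁ * B + A * b₁)) (B⁻¹ * A⁻¹ * (a₂ * B + A * b₂)) := by
  have hBJ (b j : Matrix (Fin r) (Fin r) ℂ) :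
      (b * J + B * j) * (J⁻¹ * B⁻¹) = b * B⁻¹ + B * (j * J⁻¹) * B⁻¹ := by
    simp only [add_mul, mul_assoc, mul_nonsing_inv_cancel_left _ _ hJ]
  have hBA (a b : Matrix (Fin r) (Fin r) ℂ) :
      A⁻¹ * B⁻¹ * (b * A + B * a) - A⁻¹ * a = A⁻¹ * (B⁻¹ * b) * A := by
    simp only [mul_add, mul_assoc, nonsing_inv_mul_cancel_left _ _ hB, add_sub_cancel_right]
  have hAJ (a j : Matrix (Fin r) (Fin r) ℂ) :
      (-(A⁻¹ * a * A⁻¹) * J + A⁻¹ * j) * (J⁻¹ * A) = A⁻¹ * (j * J⁻¹) * A - A⁻¹ * a := by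
    simp only [add_mul, neg_mul, mul_assoc, mul_nonsing_inv_cancel_left _ _ hJ,
      nonsing_inv_mul _ hA, mul_one]
    abel
  have hAB (a b : Matrix (Fin r) (Fin r) ℂ) :
      B⁻¹ * A⁻¹ * (a * B + A * b) = B⁻¹ * (A⁻¹ * a) * B + B⁻¹ * b := by
    simp only [mul_add, mul_assoc, nonsing_inv_mul_cancel_left _ _ hA]
  rw [hBJ, hBJ, hBA, hBA, hAJ, hAJ, hAB, hAB, wedgeTr_add_right, wedgeTr_sub_right,
    wedgeTr_add_right, wedgeTr_conj hA, wedgeTr_mul_mul_left A A⁻¹,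
    mul_nonsing_inv_cancel_left _ _ hA, mul_nonsing_inv_cancel_left _ _ hA,
    wedgeTr_comm (j₁ * J⁻¹) _ (B⁻¹ * b₁), wedgeTr_comm (j₁ * J⁻¹), wedgeTr_mul_mul_left B B⁻¹]
  ring

section PartialDerivatives

variable {r : ℕ} {X Y : ℝ × ℝ → Matrix (Fin r) (Fin r) ℂ} {u : ℝ × ℝ}

lemma mpd1_mul (hX : EntrywiseDifferentiableAt ℝ X u) (hY : EntrywiseDifferentiableAt ℝ Y u) :
    mpd1 (fun v => X v * Y v) u = mpd1 X u * Y u + X u * mpd1 Y u :=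
  entrywiseDeriv_mul (hX.comp (γ := fun s => (s, u.2)) (by fun_prop)) (hY.comp (by fun_prop))

lemma mpd2_mul (hX : EntrywiseDifferentiableAt ℝ X u) (hY : EntrywiseDifferentiableAt ℝ Y u) :
    mpd2 (fun v => X v * Y v) u = mpd2 X u * Y u + X u * mpd2 Y u :=
  entrywiseDeriv_mul (hX.comp (γ := fun s => (u.1, s)) (by fun_prop)) (hY.comp (by fun_prop))

lemma mpd1_inv (hX : EntrywiseDifferentiableAt ℝ X u) (hu : ∀ᶠ v in 𝓝 u, IsUnit (X v)) :
    mpd1 (fun v => (X v)⁻¹) u = -((X u)⁻¹ * mpd1 X u * (X u)⁻¹) :=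
  entrywiseDeriv_inv (hX.comp (γ := fun s => (s, u.2)) (by fun_prop))
    (((continuous_id.prodMk continuous_const).tendsto u.1).eventually hu)

lemma mpd2_inv (hX : EntrywiseDifferentiableAt ℝ X u) (hu : ∀ᶠ v in 𝓝 u, IsUnit (X v)) :
    mpd2 (fun v => (X v)⁻¹) u = -((X u)⁻¹ * mpd2 X u * (X u)⁻¹) :=
  entrywiseDeriv_inv (hX.comp (γ := fun s => (u.1, s)) (by fun_prop))
    (((continuous_const.prodMk continuous_id).tendsto u.2).eventually hu)

end PartialDerivatives

lemma isUnit_commJ {r : ℕ} {A B : ℝ × ℝ → Matrix (Fin r) (Fin r) ℂ} {u : ℝ × ℝ}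
    (hA : IsUnit (A u)) (hB : IsUnit (B u)) : IsUnit (commJ A B u) :=
  ((isUnit_nonsing_inv_iff.mpr hB).mul (isUnit_nonsing_inv_iff.mpr hA)).mul hB |>.mul hA

theorem stmt_13_general (r : ℕ)
    (U : Set (ℝ × ℝ)) (hU : IsOpen U)
    (A B : ℝ × ℝ → Matrix (Fin r) (Fin r) ℂ)
    (hA : ∀ i j, DifferentiableOn ℝ (fun u => A u i j) U)
    (hB : ∀ i j, DifferentiableOn ℝ (fun u => B u i j) U)
    (hAu : ∀ u ∈ U, IsUnit (A u)) (hBu : ∀ u ∈ U, IsUnit (B u)) :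
    ∀ u ∈ U,
      -(wedgeTr
          ((A u)⁻¹ * mpd1 A u)
          ((A u)⁻¹ * mpd2 A u)
          (mpd1 (fun v => B v * commJ A B v) u * ((commJ A B u)⁻¹ * (B u)⁻¹))
          (mpd2 (fun v => B v * commJ A B v) u * ((commJ A B u)⁻¹ * (B u)⁻¹)))
      - (wedgeTr
          ((A u)⁻¹ * (B u)⁻¹ * mpd1 (fun v => B v * A v) u - (A u)⁻¹ * mpd1 A u)
          ((A u)⁻¹ * (B u)⁻¹ * mpd2 (fun v => B v * A v) u - (A u)⁻¹ * mpd2 A u)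
          (mpd1 (fun v => (A v)⁻¹ * commJ A B v) u * ((commJ A B u)⁻¹ * A u))
          (mpd2 (fun v => (A v)⁻¹ * commJ A B v) u * ((commJ A B u)⁻¹ * A u)))
      =
      wedgeTr
        ((B u)⁻¹ * mpd1 B u) ((B u)⁻¹ * mpd2 B u)
        (mpd1 A u * (A u)⁻¹) (mpd2 A u * (A u)⁻¹)
      - wedgeTr
          ((A u)⁻¹ * mpd1 A u) ((A u)⁻¹ * mpd2 A u)
          (mpd1 B u * (B u)⁻¹) (mpd2 B u * (B u)⁻¹)
      + wedgeTr
          (mpd1 (commJ A B) u * (commJ A B u)⁻¹)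
          (mpd2 (commJ A B) u * (commJ A B u)⁻¹)
          ((B u)⁻¹ * (A u)⁻¹ * mpd1 (fun v => A v * B v) u)
          ((B u)⁻¹ * (A u)⁻¹ * mpd2 (fun v => A v * B v) u) := by
  intro u hu
  have hUu : U ∈ 𝓝 u := hU.mem_nhds hu
  have hA' : EntrywiseDifferentiableAt ℝ A u := fun i j => (hA i j).differentiableAt hUu
  have hB' : EntrywiseDifferentiableAt ℝ B u := fun i j => (hB i j).differentiableAt hUu
  have hAinv := hA'.inv (hAu u hu)
  have hJ : EntrywiseDifferentiableAt ℝ (commJ A B) u :=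
    (((hB'.inv (hBu u hu)).mul hAinv).mul hB').mul hA'
  have hAu' : ∀ᶠ v in 𝓝 u, IsUnit (A v) := eventually_of_mem hUu hAu
  rw [mpd1_mul hB' hJ, mpd2_mul hB' hJ, mpd1_mul hB' hA', mpd2_mul hB' hA',
    mpd1_mul hAinv hJ, mpd2_mul hAinv hJ, mpd1_inv hA' hAu', mpd2_inv hA' hAu',
    mpd1_mul hA' hB', mpd2_mul hA' hB']
  exact wedgeTr_segments_eq ((isUnit_iff_isUnit_det _).mp (hAu u hu))
    ((isUnit_iff_isUnit_det _).mp (hBu u hu))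
    ((isUnit_iff_isUnit_det _).mp (isUnit_commJ (hAu u hu) (hBu u hu))) _ _ _ _ _ _

/-- The computation (ct2)–(ct4a) of the paper: the sum of the contributions `I₁ + I₂` of
the `a`- and `b`-segments of the loop `aba⁻¹b⁻¹` equals the two-form `χ(A, B)` of
formula (x), with `J = B⁻¹A⁻¹BA`. -/
theorem stmt_13 (r : ℕ) (hr : 1 ≤ r)
    (U : Set (ℝ × ℝ)) (hU : IsOpen U)
    (A B : ℝ × ℝ → Matrix (Fin r) (Fin r) ℂ)
    (hA : ∀ i j, DifferentiableOn ℝ (fun u => A u i j) U)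
    (hB : ∀ i j, DifferentiableOn ℝ (fun u => B u i j) U)
    (hAu : ∀ u ∈ U, IsUnit (A u)) (hBu : ∀ u ∈ U, IsUnit (B u)) :
    ∀ u ∈ U,
      -(wedgeTr
          ((A u)⁻¹ * mpd1 A u)
          ((A u)⁻¹ * mpd2 A u)
          (mpd1 (fun v => B v * commJ A B v) u * ((commJ A B u)⁻¹ * (B u)⁻¹))
          (mpd2 (fun v => B v * commJ A B v) u * ((commJ A B u)⁻¹ * (B u)⁻¹)))
      - (wedgeTr
          ((A u)⁻¹ * (B u)⁻¹ * mpd1 (fun v => B v * A v) u - (A u)⁻¹ * mpd1 A u)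
          ((A u)⁻¹ * (B u)⁻¹ * mpd2 (fun v => B v * A v) u - (A u)⁻¹ * mpd2 A u)
          (mpd1 (fun v => (A v)⁻¹ * commJ A B v) u * ((commJ A B u)⁻¹ * A u))
          (mpd2 (fun v => (A v)⁻¹ * commJ A B v) u * ((commJ A B u)⁻¹ * A u)))
      =
      wedgeTr
        ((B u)⁻¹ * mpd1 B u) ((B u)⁻¹ * mpd2 B u)
        (mpd1 A u * (A u)⁻¹) (mpd2 A u * (A u)⁻¹)
      - wedgeTr
          ((A u)⁻¹ * mpd1 A u) ((A u)⁻¹ * mpd2 A u)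
          (mpd1 B u * (B u)⁻¹) (mpd2 B u * (B u)⁻¹)
      + wedgeTr
          (mpd1 (commJ A B) u * (commJ A B u)⁻¹)
          (mpd2 (commJ A B) u * (commJ A B u)⁻¹)
          ((B u)⁻¹ * (A u)⁻¹ * mpd1 (fun v => A v * B v) u)
          ((B u)⁻¹ * (A u)⁻¹ * mpd2 (fun v => A v * B v) u) :=
  stmt_13_general r U hU A B hA hB hAu hBu
end

section
/- Let r ≥ 1, let S₁, S₂, G : U → GL_r(ℂ) be differentiable maps on an open set U ⊆ ℝ² with coordinates (u₁, u₂), and let K₀ and K_∞ be constant diagonal complex matrices such that G⁻¹·e^{2πiK₀}·S₂⁻¹·S₁⁻¹·G = e^{−2πiK_∞} holds identically on U. Then, pointwise on U: Tr( δS₁·S₁⁻¹ ∧ δG·G⁻¹ ) + Tr( δS₂·S₂⁻¹ ∧ δ(S₁⁻¹G)·G⁻¹S₁ ) = Tr( (δS₁·S₁⁻¹ + e^{2πiK₀}·S₂⁻¹δS₂·e^{−2πiK₀}) ∧ δG·G⁻¹ ). (This is the computation (b4)–(b6) of the paper, which identifies the symplectic structure on the Stokes data of a rational connection with one irregular singularity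 of order 2 and one regular singularity with the symplectic structure of the Poisson–Lie group G* dual to GL_r.) -/
open Filter Topology

namespace Matrix

variable {𝕜 R : Type*} [NontriviallyNormedField 𝕜] [NormedRing R] [NormedAlgebra 𝕜 R]
  {l m n : Type*}

def HasEntrywiseDerivAt (f : 𝕜 → Matrix m n R) (f' : Matrix m n R) (t : 𝕜) : Prop :=
  ∀ i j, HasDerivAt (fun s => f s i j) (f' i j) t

variable {t : 𝕜}

theorem hasEntrywiseDerivAt_const (A : Matrix m n R) (t : 𝕜) :
    HasEntrywiseDerivAt (fun _ => A) 0 t :=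
  fun i j => hasDerivAt_const t (A i j)

theorem HasEntrywiseDerivAt.congr_of_eventuallyEq {f g : 𝕜 → Matrix m n R} {f' : Matrix m n R}
    (hf : HasEntrywiseDerivAt f f' t) (hg : g =ᶠ[𝓝 t] f) : HasEntrywiseDerivAt g f' t :=
  fun i j => (hf i j).congr_of_eventuallyEq (hg.mono fun _ hs => congrFun (congrFun hs i) j)

theorem HasEntrywiseDerivAt.mul [Fintype m] {f : 𝕜 → Matrix l m R} {g : 𝕜 → Matrix m n R}
    {f' : Matrix l m R} {g' : Matrix m n R}
    (hf : HasEntrywiseDerivAt f f' t) (hg : HasEntrywiseDerivAt g g' t) :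
    HasEntrywiseDerivAt (fun s => f s * g s) (f' * g t + f t * g') t := by
  intro i k
  simp only [mul_apply, add_apply, ← Finset.sum_add_distrib]
  exact HasDerivAt.fun_sum fun j _ => (hf i j).mul (hg j k)

theorem HasEntrywiseDerivAt.mul_const [Fintype m] {f : 𝕜 → Matrix l m R} {f' : Matrix l m R}
    (hf : HasEntrywiseDerivAt f f' t) (B : Matrix m n R) :
    HasEntrywiseDerivAt (fun s => f s * B) (f' * B) t := by
  simpa using hf.mul (hasEntrywiseDerivAt_const B t)

theorem HasEntrywiseDerivAt.of_eventuallyEq_mul_const_mul_mul_const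
    [Fintype n] {P A C : 𝕜 → Matrix n n R} {A' C' B D : Matrix n n R}
    (hP : P =ᶠ[𝓝 t] fun s => A s * B * C s * D)
    (hA : HasEntrywiseDerivAt A A' t) (hC : HasEntrywiseDerivAt C C' t) :
    HasEntrywiseDerivAt P (A' * B * C t * D + A t * B * C' * D) t := by
  have h := (((hA.mul_const B).mul hC).mul_const D).congr_of_eventuallyEq hP
  rwa [add_mul] at h

end Matrix

open Matrix

section

variable {r : ℕ}

theorem hasEntrywiseDerivAt_mpd1 {X : ℝ × ℝ → Matrix (Fin r) (Fin r) ℂ} {u : ℝ × ℝ}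
    (hX : ∀ i j, DifferentiableAt ℝ (fun v => X v i j) u) :
    HasEntrywiseDerivAt (fun s => X (s, u.2)) (mpd1 X u) u.1 := fun i j =>
  ((hX i j).comp (f := fun s => (s, u.2)) u.1
    (differentiableAt_id.prodMk (differentiableAt_const u.2))).hasDerivAt

theorem hasEntrywiseDerivAt_mpd2 {X : ℝ × ℝ → Matrix (Fin r) (Fin r) ℂ} {u : ℝ × ℝ}
    (hX : ∀ i j, DifferentiableAt ℝ (fun v => X v i j) u) :
    HasEntrywiseDerivAt (fun s => X (u.1, s)) (mpd2 X u) u.2 := fun i j =>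
  ((hX i j).comp (f := fun s => (u.1, s)) u.2
    ((differentiableAt_const u.1).prodMk differentiableAt_id)).hasDerivAt

theorem mpd1_eq_of_eventuallyEq_mul_const_mul_mul_const
    {P A C : ℝ × ℝ → Matrix (Fin r) (Fin r) ℂ} {B D : Matrix (Fin r) (Fin r) ℂ} {u : ℝ × ℝ}
    (hP : P =ᶠ[𝓝 u] fun v => A v * B * C v * D)
    (hA : ∀ i j, DifferentiableAt ℝ (fun v => A v i j) u)
    (hC : ∀ i j, DifferentiableAt ℝ (fun v => C v i j) u) :
    mpd1 P u = mpd1 A u * B * C u * D + A u * B * mpd1 C u * D :=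
  have h := HasEntrywiseDerivAt.of_eventuallyEq_mul_const_mul_mul_const
    (hP.comp_tendsto ((continuous_id.prodMk continuous_const).tendsto' _ _ rfl))
    (hasEntrywiseDerivAt_mpd1 hA) (hasEntrywiseDerivAt_mpd1 hC)
  ext fun i j => (h i j).deriv

theorem mpd2_eq_of_eventuallyEq_mul_const_mul_mul_const
    {P A C : ℝ × ℝ → Matrix (Fin r) (Fin r) ℂ} {B D : Matrix (Fin r) (Fin r) ℂ} {u : ℝ × ℝ}
    (hP : P =ᶠ[𝓝 u] fun v => A v * B * C v * D)
    (hA : ∀ i j, DifferentiableAt ℝ (fun v => A v i j) u)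
    (hC : ∀ i j, DifferentiableAt ℝ (fun v => C v i j) u) :
    mpd2 P u = mpd2 A u * B * C u * D + A u * B * mpd2 C u * D :=
  have h := HasEntrywiseDerivAt.of_eventuallyEq_mul_const_mul_mul_const
    (hP.comp_tendsto ((continuous_const.prodMk continuous_id).tendsto' _ _ rfl))
    (hasEntrywiseDerivAt_mpd2 hA) (hasEntrywiseDerivAt_mpd2 hC)
  ext fun i j => (h i j).deriv

theorem wedgeTr_add_left (a₁ a₂ b₁ b₂ c₁ c₂ : Matrix (Fin r) (Fin r) ℂ) :
    wedgeTr (a₁ + b₁) (a₂ + b₂) c₁ c₂ = wedgeTr a₁ a₂ c₁ c₂ + wedgeTr b₁ b₂ c₁ c₂ := by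
  simp only [wedgeTr, add_mul, trace_sub, trace_add]
  ring

theorem wedgeTr_add_right_s14 (a₁ a₂ b₁ b₂ c₁ c₂ : Matrix (Fin r) (Fin r) ℂ) :
    wedgeTr a₁ a₂ (b₁ + c₁) (b₂ + c₂) = wedgeTr a₁ a₂ b₁ b₂ + wedgeTr a₁ a₂ c₁ c₂ := by
  simp only [wedgeTr, mul_add, trace_sub, trace_add]
  ring

theorem wedgeTr_self (a₁ a₂ : Matrix (Fin r) (Fin r) ℂ) : wedgeTr a₁ a₂ a₁ a₂ = 0 := by
  rw [wedgeTr, trace_sub, trace_mul_comm, sub_self]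

theorem wedgeTr_mul_mul_right (a₁ a₂ b₁ b₂ M N : Matrix (Fin r) (Fin r) ℂ) :
    wedgeTr a₁ a₂ (M * b₁ * N) (M * b₂ * N) = wedgeTr (N * a₁ * M) (N * a₂ * M) b₁ b₂ := by
  simp only [wedgeTr, trace_sub, ← mul_assoc, trace_mul_cycle _ _ N]

theorem inv_mul_eq_of_monodromy {S₁ S₂ G E E' D : Matrix (Fin r) (Fin r) ℂ}
    (hS₂ : IsUnit S₂) (hG : IsUnit G) (hE : E' * E = 1)
    (h : G⁻¹ * E * S₂⁻¹ * S₁⁻¹ * G = D) :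
    S₁⁻¹ * G = S₂ * E' * G * D := by
  rw [← h]
  simp only [mul_assoc, mul_nonsing_inv_cancel_left _ _ ((isUnit_iff_isUnit_det G).mp hG)]
  rw [← mul_assoc E', hE, one_mul,
    mul_nonsing_inv_cancel_left _ _ ((isUnit_iff_isUnit_det S₂).mp hS₂)]

theorem mul_inv_mul_eq_of_monodromy {S₁ S₂ G E D : Matrix (Fin r) (Fin r) ℂ}
    (hS₁ : IsUnit S₁) (hG : IsUnit G)
    (h : G⁻¹ * E * S₂⁻¹ * S₁⁻¹ * G = D) :
    D * (G⁻¹ * S₁) = G⁻¹ * E * S₂⁻¹ := by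
  rw [← h]
  simp only [mul_assoc, mul_nonsing_inv_cancel_left _ _ ((isUnit_iff_isUnit_det G).mp hG),
    nonsing_inv_mul _ ((isUnit_iff_isUnit_det S₁).mp hS₁), mul_one]

theorem add_mul_eq_of_mul_eq_mul_mul {M : Type*} [Ring M] {a a' ai b bi c c' ci d w : M}
    (hw : d * w = ci * bi * ai) (hc : c * ci = 1) (hb : b * bi = 1) :
    (a' * b * c * d + a * b * c' * d) * w = a' * ai + a * b * (c' * ci) * (bi * ai) := by
  simp only [add_mul, mul_assoc, hw]
  rw [← mul_assoc c ci, hc, one_mul, ← mul_assoc b bi, hb, one_mul]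

end

theorem stmt_14_general (r : ℕ)
    (U : Set (ℝ × ℝ)) (hU : IsOpen U)
    (S₁ S₂ G : ℝ × ℝ → Matrix (Fin r) (Fin r) ℂ)
    (hS₂ : ∀ i j, DifferentiableOn ℝ (fun u => S₂ u i j) U)
    (hG : ∀ i j, DifferentiableOn ℝ (fun u => G u i j) U)
    (hS₁u : ∀ u ∈ U, IsUnit (S₁ u)) (hS₂u : ∀ u ∈ U, IsUnit (S₂ u))
    (hGu : ∀ u ∈ U, IsUnit (G u))
    (k₀ kinf : Fin r → ℂ)
    (hrel : ∀ u ∈ U,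
      (G u)⁻¹ *
        Matrix.diagonal (fun i => Complex.exp (2 * Real.pi * Complex.I * k₀ i)) *
        (S₂ u)⁻¹ * (S₁ u)⁻¹ * G u
      = Matrix.diagonal (fun i => Complex.exp (-(2 * Real.pi * Complex.I) * kinf i))) :
    ∀ u ∈ U,
      wedgeTr
        (mpd1 S₁ u * (S₁ u)⁻¹) (mpd2 S₁ u * (S₁ u)⁻¹)
        (mpd1 G u * (G u)⁻¹) (mpd2 G u * (G u)⁻¹)
      + wedgeTr
          (mpd1 S₂ u * (S₂ u)⁻¹) (mpd2 S₂ u * (S₂ u)⁻¹)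
          (mpd1 (fun v => (S₁ v)⁻¹ * G v) u * ((G u)⁻¹ * S₁ u))
          (mpd2 (fun v => (S₁ v)⁻¹ * G v) u * ((G u)⁻¹ * S₁ u))
      =
      wedgeTr
        (mpd1 S₁ u * (S₁ u)⁻¹ +
          Matrix.diagonal (fun i => Complex.exp (2 * Real.pi * Complex.I * k₀ i)) *
            ((S₂ u)⁻¹ * mpd1 S₂ u) *
            Matrix.diagonal (fun i => Complex.exp (-(2 * Real.pi * Complex.I) * k₀ i)))
        (mpd2 S₁ u * (S₁ u)⁻¹ +
          Matrix.diagonal (fun i => Complex.exp (2 * Real.pi * Complex.I * k₀ i)) *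
            ((S₂ u)⁻¹ * mpd2 S₂ u) *
            Matrix.diagonal (fun i => Complex.exp (-(2 * Real.pi * Complex.I) * k₀ i)))
        (mpd1 G u * (G u)⁻¹) (mpd2 G u * (G u)⁻¹) := by
  intro u hu
  set E := diagonal fun i => Complex.exp (2 * Real.pi * Complex.I * k₀ i)
  set E' := diagonal fun i => Complex.exp (-(2 * Real.pi * Complex.I) * k₀ i)
  set D := diagonal fun i => Complex.exp (-(2 * Real.pi * Complex.I) * kinf i)
  have hE : E' * E = 1 := by
    simp only [E, E', diagonal_mul_diagonal, ← Complex.exp_add, neg_mul, neg_add_cancel,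
      Complex.exp_zero, diagonal_one]
  have hP : (fun v => (S₁ v)⁻¹ * G v) =ᶠ[𝓝 u] fun v => S₂ v * E' * G v * D :=
    eventually_of_mem (hU.mem_nhds hu) fun v hv =>
      inv_mul_eq_of_monodromy (hS₂u v hv) (hGu v hv) hE (hrel v hv)
  have hW := mul_inv_mul_eq_of_monodromy (hS₁u u hu) (hGu u hu) (hrel u hu)
  have hGG : G u * (G u)⁻¹ = 1 := mul_nonsing_inv _ ((isUnit_iff_isUnit_det _).mp (hGu u hu))
  have hconj : ∀ X, E * (S₂ u)⁻¹ * (X * (S₂ u)⁻¹) * (S₂ u * E') = E * ((S₂ u)⁻¹ * X) * E' :=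
    fun X => by
      simp only [mul_assoc,
        nonsing_inv_mul_cancel_left _ _ ((isUnit_iff_isUnit_det _).mp (hS₂u u hu))]
  have dS₂ := fun i j => (hS₂ i j).differentiableAt (hU.mem_nhds hu)
  have dG := fun i j => (hG i j).differentiableAt (hU.mem_nhds hu)
  rw [mpd1_eq_of_eventuallyEq_mul_const_mul_mul_const hP dS₂ dG,
    mpd2_eq_of_eventuallyEq_mul_const_mul_mul_const hP dS₂ dG,
    add_mul_eq_of_mul_eq_mul_mul hW hGG hE, add_mul_eq_of_mul_eq_mul_mul hW hGG hE,
    wedgeTr_add_right_s14, wedgeTr_self, zero_add, wedgeTr_mul_mul_right, wedgeTr_add_left,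
    hconj, hconj]

/-- The computation (b4)–(b6) of the paper: for Stokes matrices `S₁, S₂`, transition
matrix `G` and fixed diagonal exponents `K₀, K_∞` satisfying the monodromy relation
`G⁻¹ e^{2πiK₀} S₂⁻¹ S₁⁻¹ G = e^{−2πiK_∞}`, one has
`Tr(δS₁·S₁⁻¹ ∧ δG·G⁻¹) + Tr(δS₂·S₂⁻¹ ∧ δ(S₁⁻¹G)·G⁻¹S₁)
  = Tr((δS₁·S₁⁻¹ + e^{2πiK₀}·S₂⁻¹δS₂·e^{−2πiK₀}) ∧ δG·G⁻¹)`,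
identifying the symplectic structure on the Stokes data with that of the Poisson–Lie
group dual to `GL_r`. -/
theorem stmt_14 (r : ℕ) (hr : 1 ≤ r)
    (U : Set (ℝ × ℝ)) (hU : IsOpen U)
    (S₁ S₂ G : ℝ × ℝ → Matrix (Fin r) (Fin r) ℂ)
    (hS₁ : ∀ i j, DifferentiableOn ℝ (fun u => S₁ u i j) U)
    (hS₂ : ∀ i j, DifferentiableOn ℝ (fun u => S₂ u i j) U)
    (hG : ∀ i j, DifferentiableOn ℝ (fun u => G u i j) U)
    (hS₁u : ∀ u ∈ U, IsUnit (S₁ u)) (hS₂u : ∀ u ∈ U, IsUnit (S₂ u))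
    (hGu : ∀ u ∈ U, IsUnit (G u))
    (k₀ kinf : Fin r → ℂ)
    (hrel : ∀ u ∈ U,
      (G u)⁻¹ *
        Matrix.diagonal (fun i => Complex.exp (2 * Real.pi * Complex.I * k₀ i)) *
        (S₂ u)⁻¹ * (S₁ u)⁻¹ * G u
      = Matrix.diagonal (fun i => Complex.exp (-(2 * Real.pi * Complex.I) * kinf i))) :
    ∀ u ∈ U,
      wedgeTr
        (mpd1 S₁ u * (S₁ u)⁻¹) (mpd2 S₁ u * (S₁ u)⁻¹)
        (mpd1 G u * (G u)⁻¹) (mpd2 G u * (G u)⁻¹)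
      + wedgeTr
          (mpd1 S₂ u * (S₂ u)⁻¹) (mpd2 S₂ u * (S₂ u)⁻¹)
          (mpd1 (fun v => (S₁ v)⁻¹ * G v) u * ((G u)⁻¹ * S₁ u))
          (mpd2 (fun v => (S₁ v)⁻¹ * G v) u * ((G u)⁻¹ * S₁ u))
      =
      wedgeTr
        (mpd1 S₁ u * (S₁ u)⁻¹ +
          Matrix.diagonal (fun i => Complex.exp (2 * Real.pi * Complex.I * k₀ i)) *
            ((S₂ u)⁻¹ * mpd1 S₂ u) *
            Matrix.diagonal (fun i => Complex.exp (-(2 * Real.pi * Complex.I) * k₀ i)))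
        (mpd2 S₁ u * (S₁ u)⁻¹ +
          Matrix.diagonal (fun i => Complex.exp (2 * Real.pi * Complex.I * k₀ i)) *
            ((S₂ u)⁻¹ * mpd2 S₂ u) *
            Matrix.diagonal (fun i => Complex.exp (-(2 * Real.pi * Complex.I) * k₀ i)))
        (mpd1 G u * (G u)⁻¹) (mpd2 G u * (G u)⁻¹) :=
  stmt_14_general r U hU S₁ S₂ G hS₂ hG hS₁u hS₂u hGu k₀ kinf hrel
end
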